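/- arXiv:2506.18884 — 12 statements merged into one kernel-verified Lean document; each statement's English description precedes it below -/
import Mathlib

section
/- Let n ≥ 1 and let E : (Fin n → ℝ) → ℝ be twice continuously differentiable (ContDiff ℝ 2). Equip Fin n → ℝ with the coordinatewise order, so that meet and join are the coordinatewise min and max. Then E is submodular, i.e. E(x ⊓ y) + E(x ⊔ y) ≤ E(x) + E(y) for all x, y, if and only if all off-diagonal second partial derivatives of E are nonpositive, i.e. for every x ∈ Fin n → ℝ and all indices i ≠ j, the second derivative of E at x in the directions of the i-th and j-th standard basis vectors (e.g. fderiv ℝ (fun z => fderiv ℝ E z (Pi.single i 1)) x (Pi.single j 1)) is ≤ 0. -/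
/-!
On a lattice-ordered group, taking `z = x ⊓ y`, `a = x - z`, `b = y - z` shows that submodularity
is the inequality `E (z + a + b) + E z ≤ E (z + a) + E (z + b)` for all `z` and all `a ⊓ b = 0`.
For fixed directions `u`, `v` and all nonnegative multiples of them, this inequality is equivalent to
`D²E z u v ≤ 0` everywhere: apply twice the fact that a differentiable function decreases along `w`
iff its derivative in direction `w` is nonpositive, first to `fun z => DE z v` along `u`, then to
`fun z => E (z + s • u) - E z` along `v`. On `Fin n → ℝ`, `a ⊓ b = 0` means `a, b ≥ 0` with
disjoint supports, so `D²E z a b` is a combination of cross partials with weights `a i * b j ≥ 0`;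
conversely `s • eᵢ ⊓ t • eⱼ = 0` for `i ≠ j` and `s, t ≥ 0`.
-/

section LatticeGroup

variable {α : Type*} [Lattice α] [AddCommGroup α] [IsOrderedAddMonoid α]

theorem submodular_iff_of_inf_eq_zero (E : α → ℝ) :
    (∀ x y, E (x ⊓ y) + E (x ⊔ y) ≤ E x + E y) ↔
      ∀ z a b, a ⊓ b = 0 → E (z + a + b) + E z ≤ E (z + a) + E (z + b) := by
  constructor
  · intro h z a b hab
    have hsup : a ⊔ b = a + b := by rw [← inf_add_sup a b, hab, zero_add]
    have := h (z + a) (z + b)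
    rw [← add_inf, ← add_sup, hab, hsup, add_zero, ← add_assoc] at this
    linarith
  · intro h x y
    have hxy : (x - x ⊓ y) ⊓ (y - x ⊓ y) = 0 := by rw [← inf_sub, sub_self]
    have hsum : x ⊓ y + (x - x ⊓ y) + (y - x ⊓ y) = x ⊔ y := by
      rw [eq_sub_of_add_eq' (inf_add_sup x y)]; abel
    have := h (x ⊓ y) _ _ hxy
    rw [hsum, add_sub_cancel, add_sub_cancel] at this
    linarith

end LatticeGroup

section Calculus

variable {𝕜 V F G : Type*} [NontriviallyNormedField 𝕜]
  [NormedAddCommGroup V] [NormedSpace 𝕜 V] [NormedAddCommGroup F] [NormedSpace 𝕜 F]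
  [NormedAddCommGroup G] [NormedSpace 𝕜 G]

theorem fderiv_clm_apply_const {c : V → F →L[𝕜] G} {x : V} (hc : DifferentiableAt 𝕜 c x)
    (v : F) : fderiv 𝕜 (fun y => c y v) x = (fderiv 𝕜 c x).flip v := by
  simpa using fderiv_clm_apply hc (differentiableAt_const v)

end Calculus

section Real

variable {V : Type*} [NormedAddCommGroup V] [NormedSpace ℝ V]

theorem DifferentiableAt.hasDerivAt_comp_add_smul {g : V → ℝ} {z w : V} {t : ℝ}
    (hg : DifferentiableAt ℝ g (z + t • w)) :
    HasDerivAt (fun s : ℝ => g (z + s • w)) (fderiv ℝ g (z + t • w) w) t := by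
  have hline : HasDerivAt (fun s : ℝ => z + s • w) w t := by
    simpa using ((hasDerivAt_id t).smul_const w).const_add z
  exact hg.hasFDerivAt.comp_hasDerivAt t hline

theorem forall_fderiv_apply_nonpos_iff {g : V → ℝ} (hg : Differentiable ℝ g) (w : V) :
    (∀ z, fderiv ℝ g z w ≤ 0) ↔ ∀ z, ∀ t : ℝ, 0 ≤ t → g (z + t • w) ≤ g z := by
  have hline (z : V) (t : ℝ) := (hg (z + t • w)).hasDerivAt_comp_add_smul
  constructor
  · intro h z t ht
    have hanti : Antitone (fun s : ℝ => g (z + s • w)) :=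
      antitone_of_deriv_nonpos (fun s => (hline z s).differentiableAt)
        (fun s => (hline z s).deriv ▸ h _)
    simpa using hanti ht
  · intro h z
    have hanti : Antitone (fun s : ℝ => g (z + s • w)) := fun s t hst => by
      have := h (z + s • w) (t - s) (sub_nonneg.2 hst)
      rwa [add_assoc, ← add_smul, add_sub_cancel] at this
    have := hanti.deriv_nonpos (x := 0)
    rwa [(hline z 0).deriv, zero_smul, add_zero] at this

theorem forall_fderiv_fderiv_apply_nonpos_iff {f : V → ℝ} (hf : Differentiable ℝ f)
    (hf' : Differentiable ℝ (fderiv ℝ f)) (u v : V) :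
    (∀ z, fderiv ℝ (fderiv ℝ f) z u v ≤ 0) ↔
      ∀ z, ∀ s : ℝ, 0 ≤ s → ∀ t : ℝ, 0 ≤ t →
        f (z + s • u + t • v) + f z ≤ f (z + s • u) + f (z + t • v) := by
  have hdiff (s : ℝ) : Differentiable ℝ (fun z => f (z + s • u) - f z) :=
    (hf.comp (differentiable_id.add_const _)).sub hf
  have hderiv (s : ℝ) (z : V) :
      fderiv ℝ (fun z => f (z + s • u) - f z) z v =
        fderiv ℝ f (z + s • u) v - fderiv ℝ f z v := by
    rw [fderiv_fun_sub ((differentiableAt_comp_add_right _).2 (hf _)) (hf z),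
      fderiv_comp_add_right]
    rfl
  calc (∀ z, fderiv ℝ (fderiv ℝ f) z u v ≤ 0)
      ↔ ∀ z, fderiv ℝ (fun z => fderiv ℝ f z v) z u ≤ 0 := by
        simp only [fderiv_clm_apply_const (hf' _), ContinuousLinearMap.flip_apply]
    _ ↔ ∀ z, ∀ s : ℝ, 0 ≤ s → fderiv ℝ f (z + s • u) v ≤ fderiv ℝ f z v :=
        forall_fderiv_apply_nonpos_iff (hf'.clm_apply (differentiable_const v)) u
    _ ↔ ∀ s : ℝ, 0 ≤ s → ∀ z, fderiv ℝ (fun z => f (z + s • u) - f z) z v ≤ 0 := by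
        simp only [hderiv, sub_nonpos]
        exact ⟨fun h s hs z => h z s hs, fun h z s hs => h s hs z⟩
    _ ↔ ∀ s : ℝ, 0 ≤ s → ∀ z, ∀ t : ℝ, 0 ≤ t →
          f (z + t • v + s • u) - f (z + t • v) ≤ f (z + s • u) - f z :=
        forall₂_congr fun s _ => forall_fderiv_apply_nonpos_iff (hdiff s) v
    _ ↔ _ := by
        simp only [add_right_comm _ (_ • v), sub_le_iff_le_add, sub_add_eq_add_sub,
          le_sub_iff_add_le]
        exact ⟨fun h z s hs t ht => h s hs z t ht, fun h s hs z t ht => h z s hs t ht⟩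

end Real

theorem Pi.single_inf_single_of_ne {ι β : Type*} [DecidableEq ι] [Lattice β] [Zero β]
    {i j : ι} (hij : i ≠ j) {a b : β} (ha : 0 ≤ a) (hb : 0 ≤ b) :
    Pi.single i a ⊓ Pi.single j b = (0 : ι → β) := by
  ext k
  rcases eq_or_ne k i with rfl | hki
  · simp [hij, ha]
  · rcases eq_or_ne k j with rfl | hkj
    · simp [hki, hb]
    · simp [hki, hkj]

theorem ContinuousLinearMap.apply_apply_nonpos_of_inf_eq_zero {ι : Type*} [Fintype ι]
    [DecidableEq ι] (B : (ι → ℝ) →L[ℝ] (ι → ℝ) →L[ℝ] ℝ)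
    (hB : ∀ i j, i ≠ j → B (Pi.single i 1) (Pi.single j 1) ≤ 0) {a b : ι → ℝ}
    (hab : a ⊓ b = 0) : B a b ≤ 0 := by
  have hsingle (c : ι → ℝ) (i : ι) : Pi.single i (c i) = c i • (Pi.single i 1 : ι → ℝ) := by
    rw [← Pi.single_smul', smul_eq_mul, mul_one]
  have hexpand : B a b = ∑ i, ∑ j, a i * b j * B (Pi.single i 1) (Pi.single j 1) := by
    conv_lhs => rw [← Finset.univ_sum_single a, ← Finset.univ_sum_single b]
    simp only [hsingle, map_sum, map_smul, sum_apply, smul_apply, smul_eq_mul, Finset.mul_sum]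
    rw [Finset.sum_comm]
    exact Finset.sum_congr rfl fun i _ => Finset.sum_congr rfl fun j _ => by ring
  have hmin (k : ι) : min (a k) (b k) = 0 := congrFun hab k
  rw [hexpand]
  refine Finset.sum_nonpos fun i _ => Finset.sum_nonpos fun j _ => ?_
  rcases eq_or_ne i j with rfl | hij
  · rcases (min_eq_iff.1 (hmin i)).imp And.left And.left with h | h <;> simp [h]
  · have ha : 0 ≤ a i := (hmin i).symm.trans_le (min_le_left _ _)
    have hb : 0 ≤ b j := (hmin j).symm.trans_le (min_le_right _ _)
    exact mul_nonpos_of_nonneg_of_nonpos (mul_nonneg ha hb) (hB i j hij)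

theorem submodular_iff_cross_derivatives_nonpos_general
    (n : ℕ) (E : (Fin n → ℝ) → ℝ) (hE : ContDiff ℝ 2 E) :
    (∀ x y : Fin n → ℝ, E (x ⊓ y) + E (x ⊔ y) ≤ E x + E y) ↔
      (∀ x : Fin n → ℝ, ∀ i j : Fin n, i ≠ j →
        fderiv ℝ (fun z => fderiv ℝ E z (Pi.single i 1)) x (Pi.single j 1) ≤ 0) := by
  have hE₁ : Differentiable ℝ E := hE.differentiable (by norm_num)
  have hE₂ : Differentiable ℝ (fderiv ℝ E) :=
    (hE.fderiv_right (m := 1) (by norm_num)).differentiable one_ne_zero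
  simp only [fderiv_clm_apply_const (hE₂ _), ContinuousLinearMap.flip_apply,
    submodular_iff_of_inf_eq_zero]
  constructor
  · intro hsub x i j hij
    refine (forall_fderiv_fderiv_apply_nonpos_iff hE₁ hE₂ _ _).2 (fun z s hs t ht => ?_) x
    refine hsub z _ _ ?_
    simpa only [← Pi.single_smul', smul_eq_mul, mul_one] using
      Pi.single_inf_single_of_ne hij.symm hs ht
  · intro hcross z a b hab
    have hmixed (x : Fin n → ℝ) : fderiv ℝ (fderiv ℝ E) x a b ≤ 0 :=
      (fderiv ℝ (fderiv ℝ E) x).apply_apply_nonpos_of_inf_eq_zero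
        (fun i j hij => hcross x j i hij.symm) hab
    simpa using
      (forall_fderiv_fderiv_apply_nonpos_iff hE₁ hE₂ a b).1 hmixed z 1 zero_le_one 1 zero_le_one

/-- A `C²` function `E : (Fin n → ℝ) → ℝ` is submodular for the
coordinatewise order iff all its off-diagonal second partial derivatives are
nonpositive. -/
theorem submodular_iff_cross_derivatives_nonpos
    (n : ℕ) (hn : 1 ≤ n) (E : (Fin n → ℝ) → ℝ) (hE : ContDiff ℝ 2 E) :
    (∀ x y : Fin n → ℝ, E (x ⊓ y) + E (x ⊔ y) ≤ E x + E y) ↔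
      (∀ x : Fin n → ℝ, ∀ i j : Fin n, i ≠ j →
        fderiv ℝ (fun z => fderiv ℝ E z (Pi.single i 1)) x (Pi.single j 1) ≤ 0) :=
  submodular_iff_cross_derivatives_nonpos_general n E hE
end

section
/- Let f : ℝ → ℝ be convex (ConvexOn ℝ Set.univ f). Then the function E : ℝ² → ℝ defined by E(a, b) = f(a − b) is submodular for the coordinatewise order on ℝ²: for all a₁, b₁, a₂, b₂ ∈ ℝ, f(min a₁ a₂ − min b₁ b₂) + f(max a₁ a₂ − max b₁ b₂) ≤ f(a₁ − b₁) + f(a₂ − b₂). -/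
/-!
Order the two points so that `a₁ ≤ a₂`. If also `b₁ ≤ b₂`, the meet and join are the points
themselves. Otherwise, with `h = b₁ - b₂ ≥ 0`, the inequality says that the increment
`f (x + h) - f x` is at most `f (y + h) - f y` for `x = a₁ - b₁ ≤ y = a₂ - b₁`: increments of a
convex function over a fixed step grow with the base point.
-/

theorem ConvexOn.map_add_sub_map_le {𝕜 : Type*} [Field 𝕜] [LinearOrder 𝕜] [IsStrictOrderedRing 𝕜]
    {s : Set 𝕜} {f : 𝕜 → 𝕜} (hf : ConvexOn 𝕜 s f) {x y h : 𝕜} (hx : x ∈ s) (hyh : y + h ∈ s)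
    (hxy : x ≤ y) (hh : 0 ≤ h) : f (x + h) - f x ≤ f (y + h) - f y := by
  rcases hh.eq_or_lt with rfl | hh
  · simp
  rcases hxy.eq_or_lt with rfl | hxy
  · rfl
  have hxh := hf.secant_mono_aux1 hx hyh (lt_add_of_pos_right x hh) (by linarith)
  have hy := hf.secant_mono_aux1 hx hyh hxy (lt_add_of_pos_right y hh)
  have hpos : 0 < y + h - x := by linarith
  refine le_of_mul_le_mul_left ?_ hpos
  linarith

/-- If `f : ℝ → ℝ` is convex, then `(a, b) ↦ f (a - b)` is
submodular for the coordinatewise order on `ℝ²`. -/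
theorem convexDiff_submodular (f : ℝ → ℝ) (hf : ConvexOn ℝ Set.univ f) :
    ∀ a₁ b₁ a₂ b₂ : ℝ,
      f (min a₁ a₂ - min b₁ b₂) + f (max a₁ a₂ - max b₁ b₂) ≤ f (a₁ - b₁) + f (a₂ - b₂) := by
  intro a₁ b₁ a₂ b₂
  wlog ha : a₁ ≤ a₂ generalizing a₁ b₁ a₂ b₂
  · simpa only [min_comm, max_comm, add_comm] using this a₂ b₂ a₁ b₁ (le_of_not_ge ha)
  rw [min_eq_left ha, max_eq_right ha]
  rcases le_total b₁ b₂ with hb | hb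
  · rw [min_eq_left hb, max_eq_right hb]
  rw [min_eq_right hb, max_eq_left hb]
  have hincr := hf.map_add_sub_map_le (Set.mem_univ (a₁ - b₁)) (Set.mem_univ (a₂ - b₁ + (b₁ - b₂)))
    (sub_le_sub_right ha b₁) (sub_nonneg.mpr hb)
  rw [sub_add_sub_cancel, sub_add_sub_cancel] at hincr
  linarith
end

section
/- Let (Ω, 𝒜, μ) be a measure space, let φ₁, φ₂ : Ω → ℝ be integrable with respect to μ, and let f : ℝ → ℝ be concave (ConcaveOn ℝ Set.univ f). Then f(∫ (φ₁ ⊓ φ₂) dμ) + f(∫ (φ₁ ⊔ φ₂) dμ) ≤ f(∫ φ₁ dμ) + f(∫ φ₂ dμ), where φ₁ ⊓ φ₂ and φ₁ ⊔ φ₂ denote the pointwise minimum and maximum (which are again integrable). -/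
open MeasureTheory

/-! The integrals of `φ₁ ⊓ φ₂` and `φ₁ ⊔ φ₂` enclose those of `φ₁` and `φ₂` and have the same sum,
since `min + max = φ₁ + φ₂` pointwise; and for a concave function, `f a + f b` can only grow when
two points `a ≤ b` with a fixed sum move towards each other. -/

section FourPoint

variable {𝕜 β : Type*} [Field 𝕜] [LinearOrder 𝕜] [IsStrictOrderedRing 𝕜]
  [AddCommGroup β] [PartialOrder β] [IsOrderedAddMonoid β] [Module 𝕜 β]

theorem ConcaveOn.add_le_add_of_add_eq {s : Set 𝕜} {f : 𝕜 → β} (hf : ConcaveOn 𝕜 s f)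
    {a b c d : 𝕜} (ha : a ∈ s) (hb : b ∈ s) (hac : a ≤ c) (hcb : c ≤ b)
    (hsum : a + b = c + d) : f a + f b ≤ f c + f d := by
  -- `c` and `d` are the convex combinations of `a` and `b` with swapped weights `t` and `1 - t`.
  set t := (b - c) / (b - a)
  have ht_mul : t * (b - a) = b - c :=
    div_mul_cancel_of_imp fun h => by linarith [sub_eq_zero.mp h]
  have hab : 0 ≤ b - a := sub_nonneg.mpr (hac.trans hcb)
  have ht₀ : 0 ≤ t := div_nonneg (sub_nonneg.mpr hcb) hab
  have ht₁ : 0 ≤ 1 - t := sub_nonneg.mpr (div_le_one_of_le₀ (by linarith) hab)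
  have hc : t • a + (1 - t) • b = c := by
    simp only [smul_eq_mul]
    linear_combination -ht_mul
  have hd : (1 - t) • a + t • b = d := by
    simp only [smul_eq_mul]
    linear_combination ht_mul + hsum
  have h₁ := hf.2 ha hb ht₀ ht₁ (add_sub_cancel t 1)
  have h₂ := hf.2 ha hb ht₁ ht₀ (sub_add_cancel 1 t)
  rw [hc] at h₁
  rw [hd] at h₂
  calc f a + f b = (t • f a + (1 - t) • f b) + ((1 - t) • f a + t • f b) := by
        rw [add_add_add_comm, ← add_smul, ← add_smul, add_sub_cancel, sub_add_cancel,
          one_smul, one_smul]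
    _ ≤ f c + f d := add_le_add h₁ h₂

end FourPoint

theorem integral_min_add_integral_max {Ω : Type*} [MeasurableSpace Ω] {μ : Measure Ω}
    {φ₁ φ₂ : Ω → ℝ} (h₁ : Integrable φ₁ μ) (h₂ : Integrable φ₂ μ) :
    ∫ x, min (φ₁ x) (φ₂ x) ∂μ + ∫ x, max (φ₁ x) (φ₂ x) ∂μ = ∫ x, φ₁ x ∂μ + ∫ x, φ₂ x ∂μ := by
  have hmin : Integrable (fun x => min (φ₁ x) (φ₂ x)) μ := h₁.inf h₂
  have hmax : Integrable (fun x => max (φ₁ x) (φ₂ x)) μ := h₁.sup h₂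
  rw [← integral_add hmin hmax, ← integral_add h₁ h₂]
  simp only [min_add_max]

/-- If `f : ℝ → ℝ` is concave, then `φ ↦ f (∫ φ dμ)` is submodular
(with the pointwise lattice operations) on the integrable functions. -/
theorem concave_integral_submodular
    {Ω : Type*} [MeasurableSpace Ω] (μ : Measure Ω)
    (φ₁ φ₂ : Ω → ℝ) (h₁ : Integrable φ₁ μ) (h₂ : Integrable φ₂ μ)
    (f : ℝ → ℝ) (hf : ConcaveOn ℝ Set.univ f) :
    f (∫ x, min (φ₁ x) (φ₂ x) ∂μ) + f (∫ x, max (φ₁ x) (φ₂ x) ∂μ)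
      ≤ f (∫ x, φ₁ x ∂μ) + f (∫ x, φ₂ x ∂μ) :=
  hf.add_le_add_of_add_eq trivial trivial
    (integral_mono (h₁.inf h₂) h₁ fun _ => min_le_left _ _)
    (integral_mono h₁ (h₁.sup h₂) fun _ => le_max_left _ _)
    (integral_min_add_integral_max h₁ h₂)
end

section
/- Let Y be a lattice-ordered abelian group and write y⁺ = y ⊔ 0. Let F₁, F₂ : Y → EReal be such that F₂ is Q-dominated by F₁ (for all μ₁, μ₂ ∈ Y and every t₂₁ with 0 ≤ t₂₁ ≤ (μ₂ − μ₁)⁺ there exists t₁₂ with 0 ≤ t₁₂ ≤ (μ₁ − μ₂)⁺ such that F₁(μ₁ + t₂₁ − t₁₂) + F₂(μ₂ − t₂₁ + t₁₂) ≤ F₁(μ₁) + F₂(μ₂)). Let H : Y → EReal be totally substitutable: for all μ₁, μ₂ ∈ Y and all μ₁', μ₂' with μ₁ ⊓ μ₂ ≤ μ₁' ≤ μ₁ ⊔ μ₂, μ₁ ⊓ μ₂ ≤ μ₂' ≤ μ₁ ⊔ μ₂ and μ₁' + μ₂' = μ₁ + μ₂, one has H(μ₁') + H(μ₂') ≤ H(μ₁)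 + H(μ₂). Then F₂ + H is Q-dominated by F₁ + H. -/
/-! The same transfer `t₁₂` that witnesses the Q-domination of `F₂` by `F₁` works for `F₂ + H`:
the transferred pair `(μ₁ + t₂₁ - t₁₂, μ₂ - t₂₁ + t₁₂)` has the same sum as `(μ₁, μ₂)` and both
entries lie in `[μ₁ ⊓ μ₂, μ₁ ⊔ μ₂]`, so total substitutability says the transfer does not
increase `H(μ₁) + H(μ₂)` either. -/

section

variable {Y R : Type*} [Lattice Y] [AddCommGroup Y] [AddCommMonoid R] [PartialOrder R]

/-- `IsQDominatedBy F₂ F₁` is the relation `F₂ ≪_Q F₁`. -/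
def IsQDominatedBy (F₂ F₁ : Y → R) : Prop :=
  ∀ μ₁ μ₂ t₂₁ : Y, 0 ≤ t₂₁ → t₂₁ ≤ (μ₂ - μ₁)⁺ →
    ∃ t₁₂ : Y, 0 ≤ t₁₂ ∧ t₁₂ ≤ (μ₁ - μ₂)⁺ ∧
      F₁ (μ₁ + t₂₁ - t₁₂) + F₂ (μ₂ - t₂₁ + t₁₂) ≤ F₁ μ₁ + F₂ μ₂

def TotallySubstitutable (H : Y → R) : Prop :=
  ∀ μ₁ μ₂ μ₁' μ₂' : Y, μ₁' ∈ Set.Icc (μ₁ ⊓ μ₂) (μ₁ ⊔ μ₂) → μ₂' ∈ Set.Icc (μ₁ ⊓ μ₂) (μ₁ ⊔ μ₂) →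
    μ₁' + μ₂' = μ₁ + μ₂ → H μ₁' + H μ₂' ≤ H μ₁ + H μ₂

theorem add_sub_mem_Icc_inf_sup [AddLeftMono Y] {a b s t : Y} (hs₀ : 0 ≤ s) (hs : s ≤ (b - a)⁺)
    (ht₀ : 0 ≤ t) (ht : t ≤ (a - b)⁺) : a + s - t ∈ Set.Icc (a ⊓ b) (a ⊔ b) := by
  constructor
  · calc a ⊓ b = a - (a - b)⁺ := inf_eq_sub_posPart_sub a b
      _ ≤ a - t := sub_le_sub_left ht a
      _ ≤ a + s - t := sub_le_sub_right (le_add_of_nonneg_right hs₀) t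
  · calc a + s - t ≤ a + s := sub_le_self _ ht₀
      _ ≤ a + (b - a)⁺ := add_le_add_right hs a
      _ = a ⊔ b := by rw [sup_comm, sup_eq_add_posPart_sub]

theorem IsQDominatedBy.add_of_totallySubstitutable [AddLeftMono Y] [IsOrderedAddMonoid R]
    {F₁ F₂ H : Y → R} (hQ : IsQDominatedBy F₂ F₁) (hH : TotallySubstitutable H) :
    IsQDominatedBy (F₂ + H) (F₁ + H) := by
  intro μ₁ μ₂ t₂₁ ht₀ ht
  obtain ⟨t₁₂, hs₀, hs, hF⟩ := hQ μ₁ μ₂ t₂₁ ht₀ ht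
  refine ⟨t₁₂, hs₀, hs, ?_⟩
  have h₁ := add_sub_mem_Icc_inf_sup ht₀ ht hs₀ hs
  have h₂ : μ₂ - t₂₁ + t₁₂ ∈ Set.Icc (μ₁ ⊓ μ₂) (μ₁ ⊔ μ₂) := by
    rw [sub_add_eq_add_sub, inf_comm, sup_comm]
    exact add_sub_mem_Icc_inf_sup hs₀ hs ht₀ ht
  have hHsum := hH μ₁ μ₂ _ _ h₁ h₂ (by abel)
  simp only [Pi.add_apply]
  calc F₁ (μ₁ + t₂₁ - t₁₂) + H (μ₁ + t₂₁ - t₁₂) + (F₂ (μ₂ - t₂₁ + t₁₂) + H (μ₂ - t₂₁ + t₁₂))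
      = F₁ (μ₁ + t₂₁ - t₁₂) + F₂ (μ₂ - t₂₁ + t₁₂) +
          (H (μ₁ + t₂₁ - t₁₂) + H (μ₂ - t₂₁ + t₁₂)) := add_add_add_comm _ _ _ _
    _ ≤ F₁ μ₁ + F₂ μ₂ + (H μ₁ + H μ₂) := add_le_add hF hHsum
    _ = F₁ μ₁ + H μ₁ + (F₂ μ₂ + H μ₂) := add_add_add_comm _ _ _ _

end

/-- If `F₂` is Q-dominated by `F₁` and `H` is totally
substitutable, then `F₂ + H` is Q-dominated by `F₁ + H`. -/
theorem Q_dominance_add_totallySubstitutable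
    {Y : Type*} [Lattice Y] [AddCommGroup Y]
    [CovariantClass Y Y (· + ·) (· ≤ ·)]
    (F₁ F₂ H : Y → EReal)
    (hQ : ∀ μ₁ μ₂ t₂₁ : Y, 0 ≤ t₂₁ → t₂₁ ≤ (μ₂ - μ₁) ⊔ 0 →
      ∃ t₁₂ : Y, 0 ≤ t₁₂ ∧ t₁₂ ≤ (μ₁ - μ₂) ⊔ 0 ∧
        F₁ (μ₁ + t₂₁ - t₁₂) + F₂ (μ₂ - t₂₁ + t₁₂) ≤ F₁ μ₁ + F₂ μ₂)
    (hH : ∀ μ₁ μ₂ μ₁' μ₂' : Y,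
      μ₁ ⊓ μ₂ ≤ μ₁' → μ₁' ≤ μ₁ ⊔ μ₂ → μ₁ ⊓ μ₂ ≤ μ₂' → μ₂' ≤ μ₁ ⊔ μ₂ →
      μ₁' + μ₂' = μ₁ + μ₂ → H μ₁' + H μ₂' ≤ H μ₁ + H μ₂) :
    ∀ μ₁ μ₂ t₂₁ : Y, 0 ≤ t₂₁ → t₂₁ ≤ (μ₂ - μ₁) ⊔ 0 →
      ∃ t₁₂ : Y, 0 ≤ t₁₂ ∧ t₁₂ ≤ (μ₁ - μ₂) ⊔ 0 ∧
        (F₁ (μ₁ + t₂₁ - t₁₂) + H (μ₁ + t₂₁ - t₁₂)) +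
          (F₂ (μ₂ - t₂₁ + t₁₂) + H (μ₂ - t₂₁ + t₁₂)) ≤
          (F₁ μ₁ + H μ₁) + (F₂ μ₂ + H μ₂) :=
  IsQDominatedBy.add_of_totallySubstitutable (F₂ := F₂) hQ
    fun _ _ _ _ h₁ h₂ ↦ hH _ _ _ _ h₁.1 h₁.2 h₂.1 h₂.2
end

section
/- Let ι be a nonempty finite type and let E : (ι → ℝ) → ℝ be convex (ConvexOn ℝ Set.univ E). Define the convex conjugate E* : (ι → ℝ) → EReal by E*(μ) = ⨆_{φ : ι → ℝ} ((∑ i, μ i * φ i) − E(φ)), the supremum taken in EReal. Equip ι → ℝ with the coordinatewise order, so meet and join are coordinatewise min and max and x⁺ = x ⊔ 0. Then the following are equivalent: (1) E is submodular, i.e. E(φ₁ ⊓ φ₂) + E(φ₁ ⊔ φ₂) ≤ E(φ₁) + E(φ₂) for all φ₁, φ₂; (2) E* is substitutable, i.e. for all μ₁, μ₂ : ι → ℝ and every t₂₁ with 0 ≤ t₂₁ ≤ (μ₂ − μ₁)⁺ there exists t₁₂ with 0 ≤ t₁₂ ≤ (μ₁ − μ₂)⁺ such that E*(μ₁ + t₂₁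 − t₁₂) + E*(μ₂ − t₂₁ + t₁₂) ≤ E*(μ₁) + E*(μ₂) in EReal. -/
/-!
Both directions rest on the coordinatewise identity
`μ₁ ⬝ᵥ (φ₁ ⊓ φ₂) + μ₂ ⬝ᵥ (φ₁ ⊔ φ₂) = μ₁ ⬝ᵥ φ₁ + μ₂ ⬝ᵥ φ₂ + (μ₂ - μ₁) ⬝ᵥ (φ₁ - φ₂)⁺`.

If `E` is submodular, this identity together with Fenchel–Young at `φ₁ ⊓ φ₂` and `φ₁ ⊔ φ₂`
bounds the concave function `(φ₁, φ₂) ↦ (μ₁ + t₂₁) ⬝ᵥ φ₁ - E φ₁ + (μ₂ - t₂₁) ⬝ᵥ φ₂ - E φ₂`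
by the sublinear function `(μ₁ - μ₂)⁺ ⬝ᵥ (φ₁ - φ₂)⁺` plus `E* μ₁ + E* μ₂`. A Hahn–Banach sandwich
puts an affine function `t₁₂ ⬝ᵥ (φ₁ - φ₂) + b` between them; comparing it with the sublinear bound
forces `0 ≤ t₁₂ ≤ (μ₁ - μ₂)⁺`, and the lower bound is the substitutability inequality.

Conversely, choose subgradients `μ₁` of `E` at `φ₁ ⊓ φ₂` and `μ₂` at `φ₁ ⊔ φ₂`, so that
Fenchel–Young is an equality there, and move `(μ₂ - μ₁)⁺` exactly on the coordinates where
`φ₂ < φ₁`. Whatever `t₁₂` substitutability returns, the identity turns the resulting inequality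
between conjugates into submodularity at `φ₁, φ₂`.
-/

open scoped BigOperators

/-- The convex conjugate of `E : (ι → ℝ) → ℝ`, valued in `EReal = ℝ ∪ {±∞}`,
with respect to the standard pairing `⟨μ, φ⟩ = ∑ i, μ i * φ i`. -/
noncomputable def convexConj {ι : Type*} [Fintype ι]
    (E : (ι → ℝ) → ℝ) (μ : ι → ℝ) : EReal :=
  ⨆ φ : ι → ℝ, ((∑ i, μ i * φ i - E φ : ℝ) : EReal)

open Set

def IsSubmodular {X β : Type*} [Lattice X] [Add β] [LE β] (E : X → β) : Prop :=
  ∀ φ₁ φ₂, E (φ₁ ⊓ φ₂) + E (φ₁ ⊔ φ₂) ≤ E φ₁ + E φ₂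

def IsSubstitutable {G β : Type*} [Lattice G] [AddGroup G] [Add β] [LE β] (F : G → β) : Prop :=
  ∀ μ₁ μ₂ t₂₁ : G, 0 ≤ t₂₁ → t₂₁ ≤ (μ₂ - μ₁)⁺ →
    ∃ t₁₂ : G, 0 ≤ t₁₂ ∧ t₁₂ ≤ (μ₁ - μ₂)⁺ ∧ F (μ₁ + t₂₁ - t₁₂) + F (μ₂ - t₂₁ + t₁₂) ≤ F μ₁ + F μ₂

lemma posPart_eq_add_posPart_neg {α : Type*} [AddCommGroup α] [Lattice α] [AddLeftMono α]
    (a : α) : a⁺ = a + (-a)⁺ := by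
  rw [posPart_neg, eq_add_of_sub_eq (posPart_sub_negPart a)]

lemma le_of_forall_pos_mul_le_mul_add {x y b : ℝ} (h : ∀ r > 0, x * r ≤ y * r + b) : x ≤ y := by
  by_contra! hxy
  have hr := h ((|b| + 1) / (x - y)) (div_pos (by positivity) (sub_pos.2 hxy))
  rw [← sub_le_iff_le_add', ← sub_mul, mul_div_cancel₀ _ (sub_pos.2 hxy).ne'] at hr
  linarith [le_abs_self b]

section Sandwich
variable {V : Type*} [TopologicalSpace V] [AddCommGroup V] [Module ℝ V]
  [IsTopologicalAddGroup V] [ContinuousSMul ℝ V]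

theorem ConvexOn.exists_affine_between {h : V → ℝ} (hconv : ConvexOn ℝ univ h)
    (hcont : Continuous h) {S : Set (V × ℝ)} (hS : Convex ℝ S) (hne : S.Nonempty)
    (hSh : ∀ p ∈ S, p.2 ≤ h p.1) :
    ∃ (ℓ : StrongDual ℝ V) (b : ℝ), (∀ y, ℓ y + b ≤ h y) ∧ ∀ p ∈ S, p.2 ≤ ℓ p.1 + b := by
  have hU : IsOpen {p : V × ℝ | p.1 ∈ univ ∧ h p.1 < p.2} := by
    simpa using isOpen_lt (hcont.comp continuous_fst) continuous_snd
  have hdisj : Disjoint {p : V × ℝ | p.1 ∈ univ ∧ h p.1 < p.2} S :=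
    disjoint_left.2 fun p hpU hpS => (hSh p hpS).not_gt hpU.2
  obtain ⟨f, u, hfU, hfS⟩ := geometric_hahn_banach_open hconv.convex_strict_epigraph hU hS hdisj
  have hf : ∀ y s, f (y, s) = f (y, 0) + s * f (0, 1) := fun y s => by
    rw [← smul_eq_mul, ← map_smul, ← map_add]; simp
  have hfU' : ∀ y s, h y < s → f (y, 0) + s * f (0, 1) < u := fun y s hs =>
    hf y s ▸ hfU (y, s) ⟨trivial, hs⟩
  have hfS' : ∀ p ∈ S, u ≤ f (p.1, 0) + p.2 * f (0, 1) := fun p hp => hf p.1 p.2 ▸ hfS p hp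
  obtain ⟨p₀, hp₀⟩ := hne
  -- `f` separates a point of `S` from a point of the strict epigraph straight above it
  have hβ : 0 < -f (0, 1) := by
    nlinarith [hfU' p₀.1 (h p₀.1 + 1) (lt_add_one _), hfS' p₀ hp₀, hSh p₀ hp₀]
  set ℓ := (-f (0, 1))⁻¹ • f.comp (ContinuousLinearMap.inl ℝ V ℝ)
  have hℓ : ∀ y, ℓ y + -(-f (0, 1))⁻¹ * u = (f (y, 0) - u) / -f (0, 1) := fun y => by
    simp [ℓ]; ring
  refine ⟨ℓ, -(-f (0, 1))⁻¹ * u, fun y => ?_, fun p hp => ?_⟩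
  · refine le_of_forall_gt_imp_ge_of_dense fun s hs => ?_
    rw [hℓ, div_le_iff₀ hβ]
    linarith [hfU' y s hs]
  · rw [hℓ, le_div_iff₀ hβ]
    linarith [hfS' p hp]

end Sandwich

section
variable {ι : Type*} [Fintype ι]

lemma convexOn_dotProduct_posPart {a : ι → ℝ} (ha : 0 ≤ a) :
    ConvexOn ℝ univ fun y : ι → ℝ => a ⬝ᵥ y⁺ := by
  refine ⟨convex_univ, fun x _ y _ l m hl hm _ => ?_⟩
  have hpos : (l • x + m • y)⁺ ≤ l • x⁺ + m • y⁺ :=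
    sup_le (by gcongr <;> exact le_posPart _) (by positivity)
  calc a ⬝ᵥ (l • x + m • y)⁺ ≤ a ⬝ᵥ (l • x⁺ + m • y⁺) :=
        dotProduct_le_dotProduct_of_nonneg_left hpos ha
    _ = l • (a ⬝ᵥ x⁺) + m • (a ⬝ᵥ y⁺) := by
        rw [dotProduct_add, dotProduct_smul, dotProduct_smul]

lemma nonneg_and_le_of_forall_dotProduct_add_le {a t : ι → ℝ} {b c : ℝ}
    (h : ∀ y, t ⬝ᵥ y + b ≤ a ⬝ᵥ y⁺ + c) : 0 ≤ t ∧ t ≤ a := by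
  classical
  have hsingle : ∀ i (r : ℝ), t i * r + b ≤ a i * r⁺ + c := fun i r => by
    have hr := h (Pi.single i r)
    have hpos : (Pi.single i r : ι → ℝ)⁺ = Pi.single i r⁺ := by
      ext j; by_cases hj : j = i <;> simp [hj]
    rwa [hpos, dotProduct_single, dotProduct_single] at hr
  refine ⟨fun i => ?_, fun i => ?_⟩
  · have := le_of_forall_pos_mul_le_mul_add (x := -t i) (y := 0) (b := c - b) fun r hr => by
      have := hsingle i (-r)
      rw [posPart_eq_zero.2 (by linarith)] at this
      linarith
    simpa using this
  · refine le_of_forall_pos_mul_le_mul_add (b := c - b) fun r hr => ?_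
    have := hsingle i r
    rw [posPart_eq_self.2 hr.le] at this
    linarith

theorem ConvexOn.concaveOn_dotProduct_sub {E : (ι → ℝ) → ℝ} (hE : ConvexOn ℝ univ E)
    (ν : ι → ℝ) : ConcaveOn ℝ univ fun φ => ν ⬝ᵥ φ - E φ :=
  ((dotProductBilin ℝ ℝ ν).concaveOn convex_univ).sub hE

lemma dotProduct_inf_add_dotProduct_sup (μ₁ μ₂ φ₁ φ₂ : ι → ℝ) :
    μ₁ ⬝ᵥ (φ₁ ⊓ φ₂) + μ₂ ⬝ᵥ (φ₁ ⊔ φ₂) = μ₁ ⬝ᵥ φ₁ + μ₂ ⬝ᵥ φ₂ + (μ₂ - μ₁) ⬝ᵥ (φ₁ - φ₂)⁺ := by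
  rw [inf_eq_sub_posPart_sub, sup_eq_add_posPart_sub, dotProduct_sub, dotProduct_add,
    sub_dotProduct]
  ring

lemma dotProduct_posPart_le_sub_dotProduct {w d u v : ι → ℝ}
    (hu : ∀ i, u i = if 0 < d i then (w i)⁺ else 0) (hv₀ : 0 ≤ v) (hv : v ≤ (-w)⁺) :
    w ⬝ᵥ d⁺ ≤ (u - v) ⬝ᵥ d := by
  refine Finset.sum_le_sum fun i _ => ?_
  have hvi : v i ≤ (w i)⁺ - w i := by
    rw [posPart_eq_add_posPart_neg (w i), add_sub_cancel_left]
    exact hv i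
  have hv₀i : 0 ≤ v i := hv₀ i
  rw [Pi.sub_apply, hu i, Pi.posPart_apply]
  split_ifs with hd
  · rw [posPart_eq_self.2 hd.le]; nlinarith
  · rw [posPart_eq_zero.2 (not_lt.1 hd)]; nlinarith

theorem ConvexOn.exists_dotProduct_add_between {h : (ι → ℝ) → ℝ} (hconv : ConvexOn ℝ univ h)
    {S : Set ((ι → ℝ) × ℝ)} (hS : Convex ℝ S) (hne : S.Nonempty) (hSh : ∀ p ∈ S, p.2 ≤ h p.1) :
    ∃ (t : ι → ℝ) (b : ℝ), (∀ y, t ⬝ᵥ y + b ≤ h y) ∧ ∀ p ∈ S, p.2 ≤ t ⬝ᵥ p.1 + b := by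
  classical
  obtain ⟨ℓ, b, hℓh, hSℓ⟩ := hconv.exists_affine_between
    (continuousOn_univ.1 (hconv.continuousOn isOpen_univ)) hS hne hSh
  have hℓ : ∀ y, ℓ y = (fun i => ℓ (Pi.single i 1)) ⬝ᵥ y := fun y => by
    conv_lhs => rw [← Finset.univ_sum_single y]
    rw [map_sum, dotProduct]
    refine Finset.sum_congr rfl fun i _ => ?_
    rw [mul_comm, ← smul_eq_mul, ← map_smul, ← Pi.single_smul', smul_eq_mul, mul_one]
  exact ⟨_, b, fun y => hℓ y ▸ hℓh y, fun p hp => hℓ p.1 ▸ hSℓ p hp⟩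

section Conj
variable (E : (ι → ℝ) → ℝ)

lemma coe_dotProduct_sub_le_convexConj (μ φ : ι → ℝ) :
    ((μ ⬝ᵥ φ - E φ : ℝ) : EReal) ≤ convexConj E μ :=
  le_iSup (fun φ => ((μ ⬝ᵥ φ - E φ : ℝ) : EReal)) φ

lemma convexConj_ne_bot (μ : ι → ℝ) : convexConj E μ ≠ ⊥ :=
  ne_bot_of_le_ne_bot (EReal.coe_ne_bot _) (coe_dotProduct_sub_le_convexConj E μ 0)

lemma convexConj_le_coe_iff {μ : ι → ℝ} {c : ℝ} :
    convexConj E μ ≤ c ↔ ∀ φ, μ ⬝ᵥ φ - E φ ≤ c := by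
  simp only [convexConj, iSup_le_iff, EReal.coe_le_coe_iff]
  rfl

lemma convexConj_add_convexConj_le_coe_iff {ν₁ ν₂ : ι → ℝ} {c : ℝ} :
    convexConj E ν₁ + convexConj E ν₂ ≤ c ↔
      ∀ φ₁ φ₂, ν₁ ⬝ᵥ φ₁ - E φ₁ + (ν₂ ⬝ᵥ φ₂ - E φ₂) ≤ c := by
  refine ⟨fun h φ₁ φ₂ => ?_, fun h => EReal.add_le_of_forall_lt fun a ha b hb => ?_⟩
  · refine EReal.coe_le_coe_iff.1 (le_trans ?_ h)
    rw [EReal.coe_add]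
    exact add_le_add (coe_dotProduct_sub_le_convexConj E ν₁ φ₁)
      (coe_dotProduct_sub_le_convexConj E ν₂ φ₂)
  · obtain ⟨φ₁, hφ₁⟩ := lt_iSup_iff.1 ha
    obtain ⟨φ₂, hφ₂⟩ := lt_iSup_iff.1 hb
    calc a + b ≤ ((ν₁ ⬝ᵥ φ₁ - E φ₁ : ℝ) : EReal) + ((ν₂ ⬝ᵥ φ₂ - E φ₂ : ℝ) : EReal) :=
          add_le_add hφ₁.le hφ₂.le
      _ ≤ c := by rw [← EReal.coe_add, EReal.coe_le_coe_iff]; exact h φ₁ φ₂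

end Conj

theorem ConvexOn.exists_convexConj_eq {E : (ι → ℝ) → ℝ} (hE : ConvexOn ℝ univ E) (ψ : ι → ℝ) :
    ∃ μ, convexConj E μ = ((μ ⬝ᵥ ψ - E ψ : ℝ) : EReal) := by
  obtain ⟨μ, b, hμE, hμψ⟩ := hE.exists_dotProduct_add_between (convex_singleton (ψ, E ψ))
    (singleton_nonempty _) (by simp)
  have hψ : E ψ ≤ μ ⬝ᵥ ψ + b := hμψ _ rfl
  refine ⟨μ, le_antisymm ((convexConj_le_coe_iff E).2 fun φ => ?_)
    (coe_dotProduct_sub_le_convexConj E μ ψ)⟩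
  linarith [hμE φ]

lemma dotProduct_add_sub_le_of_isSubmodular {E : (ι → ℝ) → ℝ} (hsub : IsSubmodular E)
    {μ₁ μ₂ t₂₁ : ι → ℝ} (ht₀ : 0 ≤ t₂₁) (ht : t₂₁ ≤ (μ₂ - μ₁)⁺) {c : ℝ}
    (hc : ∀ x y, μ₁ ⬝ᵥ x - E x + (μ₂ ⬝ᵥ y - E y) ≤ c) (φ₁ φ₂ : ι → ℝ) :
    (μ₁ + t₂₁) ⬝ᵥ φ₁ - E φ₁ + ((μ₂ - t₂₁) ⬝ᵥ φ₂ - E φ₂) ≤ (μ₁ - μ₂)⁺ ⬝ᵥ (φ₁ - φ₂)⁺ + c := by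
  have ht₂₁ : t₂₁ ⬝ᵥ (φ₁ - φ₂) ≤ (μ₂ - μ₁)⁺ ⬝ᵥ (φ₁ - φ₂)⁺ :=
    (dotProduct_le_dotProduct_of_nonneg_left (le_posPart _) ht₀).trans
      (dotProduct_le_dotProduct_of_nonneg_right ht (posPart_nonneg _))
  have hpair := dotProduct_inf_add_dotProduct_sup μ₁ μ₂ φ₁ φ₂
  rw [posPart_eq_add_posPart_neg (μ₂ - μ₁), neg_sub, add_dotProduct] at ht₂₁
  simp only [add_dotProduct, sub_dotProduct, dotProduct_sub] at ht₂₁ hpair ⊢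
  linarith [hsub φ₁ φ₂, hc (φ₁ ⊓ φ₂) (φ₁ ⊔ φ₂)]

theorem exists_convexConj_substitute_le {E : (ι → ℝ) → ℝ} (hE : ConvexOn ℝ univ E)
    (hsub : IsSubmodular E) {μ₁ μ₂ t₂₁ : ι → ℝ}
    (ht₀ : 0 ≤ t₂₁) (ht : t₂₁ ≤ (μ₂ - μ₁)⁺) {c : ℝ}
    (hc : convexConj E μ₁ + convexConj E μ₂ ≤ c) :
    ∃ t₁₂ : ι → ℝ, 0 ≤ t₁₂ ∧ t₁₂ ≤ (μ₁ - μ₂)⁺ ∧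
      convexConj E (μ₁ + t₂₁ - t₁₂) + convexConj E (μ₂ - t₂₁ + t₁₂) ≤ c := by
  rw [convexConj_add_convexConj_le_coe_iff] at hc
  set Ψ : (ι → ℝ) × (ι → ℝ) → ℝ := fun φ =>
    (μ₁ + t₂₁) ⬝ᵥ φ.1 - E φ.1 + ((μ₂ - t₂₁) ⬝ᵥ φ.2 - E φ.2)
  have hΨ : ConcaveOn ℝ univ Ψ :=
    ((hE.concaveOn_dotProduct_sub _).comp_linearMap (LinearMap.fst ℝ _ _)).add
      ((hE.concaveOn_dotProduct_sub _).comp_linearMap (LinearMap.snd ℝ _ _))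
  set L : ((ι → ℝ) × (ι → ℝ)) × ℝ →ₗ[ℝ] (ι → ℝ) × ℝ :=
    (LinearMap.fst ℝ (ι → ℝ) (ι → ℝ) - LinearMap.snd ℝ (ι → ℝ) (ι → ℝ)).prodMap LinearMap.id
  have hk := (convexOn_dotProduct_posPart (posPart_nonneg (μ₁ - μ₂))).add_const c
  obtain ⟨t, b, hth, hΨt⟩ := hk.exists_dotProduct_add_between
    (hΨ.convex_hypograph.linear_image L) ⟨_, (0, Ψ 0), ⟨trivial, le_rfl⟩, rfl⟩ (by
      rintro _ ⟨⟨φ, s⟩, ⟨-, hs⟩, rfl⟩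
      exact hs.trans (dotProduct_add_sub_le_of_isSubmodular hsub ht₀ ht hc φ.1 φ.2))
  obtain ⟨ht₀', ht'⟩ := nonneg_and_le_of_forall_dotProduct_add_le hth
  have hb : b ≤ c := by simpa using hth 0
  refine ⟨t, ht₀', ht', (convexConj_add_convexConj_le_coe_iff E).2 fun φ₁ φ₂ => ?_⟩
  have := hΨt (L ((φ₁, φ₂), Ψ (φ₁, φ₂))) ⟨_, ⟨trivial, le_rfl⟩, rfl⟩
  simp only [L, Ψ, LinearMap.prodMap_apply, LinearMap.sub_apply, LinearMap.fst_apply,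
    LinearMap.snd_apply, LinearMap.id_apply, dotProduct_sub, add_dotProduct, sub_dotProduct]
    at this ⊢
  linarith

theorem isSubstitutable_convexConj {E : (ι → ℝ) → ℝ} (hE : ConvexOn ℝ univ E)
    (hsub : IsSubmodular E) : IsSubstitutable (convexConj E) := by
  intro μ₁ μ₂ t₂₁ ht₀ ht
  obtain htop | htop := eq_or_ne (convexConj E μ₁ + convexConj E μ₂) ⊤
  · exact ⟨0, le_rfl, posPart_nonneg _, htop ▸ le_top⟩
  have hbot : convexConj E μ₁ + convexConj E μ₂ ≠ ⊥ :=
    EReal.add_ne_bot_iff.2 ⟨convexConj_ne_bot E μ₁, convexConj_ne_bot E μ₂⟩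
  rw [← EReal.coe_toReal htop hbot]
  exact exists_convexConj_substitute_le hE hsub ht₀ ht (EReal.coe_toReal htop hbot).ge

theorem isSubmodular_of_isSubstitutable_convexConj {E : (ι → ℝ) → ℝ} (hE : ConvexOn ℝ univ E)
    (hsubst : IsSubstitutable (convexConj E)) : IsSubmodular E := by
  intro φ₁ φ₂
  obtain ⟨μ₁, hμ₁⟩ := hE.exists_convexConj_eq (φ₁ ⊓ φ₂)
  obtain ⟨μ₂, hμ₂⟩ := hE.exists_convexConj_eq (φ₁ ⊔ φ₂)
  set t₂₁ : ι → ℝ := fun i => if 0 < (φ₁ - φ₂) i then ((μ₂ - μ₁) i)⁺ else 0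
  have ht₀ : 0 ≤ t₂₁ := fun i => by
    dsimp only [t₂₁]; split_ifs <;> simp [posPart_nonneg]
  have ht : t₂₁ ≤ (μ₂ - μ₁)⁺ := fun i => by
    dsimp only [t₂₁]; split_ifs <;> simp [posPart_nonneg]
  obtain ⟨t₁₂, ht₁₂₀, ht₁₂, hconj⟩ := hsubst μ₁ μ₂ t₂₁ ht₀ ht
  rw [hμ₁, hμ₂, ← EReal.coe_add, convexConj_add_convexConj_le_coe_iff] at hconj
  have hshift : (μ₂ - μ₁) ⬝ᵥ (φ₁ - φ₂)⁺ ≤ (t₂₁ - t₁₂) ⬝ᵥ (φ₁ - φ₂) :=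
    dotProduct_posPart_le_sub_dotProduct (fun _ => rfl) ht₁₂₀ (by rwa [neg_sub])
  have hpair := dotProduct_inf_add_dotProduct_sup μ₁ μ₂ φ₁ φ₂
  have hφ := hconj φ₁ φ₂
  simp only [add_dotProduct, sub_dotProduct, dotProduct_sub] at hshift hpair hφ
  linarith

end

theorem submodular_iff_conj_substitutable_general
    {ι : Type*} [Fintype ι]
    (E : (ι → ℝ) → ℝ) (hE : ConvexOn ℝ Set.univ E) :
    (∀ φ₁ φ₂ : ι → ℝ, E (φ₁ ⊓ φ₂) + E (φ₁ ⊔ φ₂) ≤ E φ₁ + E φ₂) ↔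
      (∀ μ₁ μ₂ t₂₁ : ι → ℝ, 0 ≤ t₂₁ → t₂₁ ≤ (μ₂ - μ₁) ⊔ 0 →
        ∃ t₁₂ : ι → ℝ, 0 ≤ t₁₂ ∧ t₁₂ ≤ (μ₁ - μ₂) ⊔ 0 ∧
          convexConj E (μ₁ + t₂₁ - t₁₂) + convexConj E (μ₂ - t₂₁ + t₁₂) ≤
            convexConj E μ₁ + convexConj E μ₂) :=
  ⟨isSubstitutable_convexConj hE, isSubmodular_of_isSubstitutable_convexConj hE⟩

/-- Duality between submodularity and substitutability in the
finite-dimensional lattice `ι → ℝ`: a convex function `E` is submodular iff its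
convex conjugate `E*` is substitutable. -/
theorem submodular_iff_conj_substitutable
    {ι : Type*} [Fintype ι] [Nonempty ι]
    (E : (ι → ℝ) → ℝ) (hE : ConvexOn ℝ Set.univ E) :
    (∀ φ₁ φ₂ : ι → ℝ, E (φ₁ ⊓ φ₂) + E (φ₁ ⊔ φ₂) ≤ E φ₁ + E φ₂) ↔
      (∀ μ₁ μ₂ t₂₁ : ι → ℝ, 0 ≤ t₂₁ → t₂₁ ≤ (μ₂ - μ₁) ⊔ 0 →
        ∃ t₁₂ : ι → ℝ, 0 ≤ t₁₂ ∧ t₁₂ ≤ (μ₁ - μ₂) ⊔ 0 ∧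
          convexConj E (μ₁ + t₂₁ - t₁₂) + convexConj E (μ₂ - t₂₁ + t₁₂) ≤
            convexConj E μ₁ + convexConj E μ₂) :=
  submodular_iff_conj_substitutable_general E hE
end

section
/- Let (S, Σ) be a measurable space, let μ₁ and μ₂ be finite (positive) Borel-type measures on (S, Σ), and let μ₁' be a finite measure satisfying μ₁ ⊓ μ₂ ≤ μ₁' and μ₁' ≤ μ₁ ⊔ μ₂, where ⊓ and ⊔ denote the lattice infimum and supremum of measures. Then there exists a measurable function h : S → ℝ with 0 ≤ h(s) ≤ 1 for all s, such that for every measurable set A, μ₁'(A) = ∫_A (1 − h) dμ₁ + ∫_A h dμ₂. -/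
open MeasureTheory

/-- Monotonicity of Radon-Nikodym derivatives for measures absolutely
continuous w.r.t. a σ-finite measure. -/
lemma rnDeriv_mono_aux {S : Type*} [MeasurableSpace S]
    (ν₁ ν₂ μ : Measure S) [SigmaFinite μ]
    [ν₁.HaveLebesgueDecomposition μ] [ν₂.HaveLebesgueDecomposition μ]
    (h : ν₁ ≤ ν₂) (h₁ : ν₁ ≪ μ) (h₂ : ν₂ ≪ μ) :
    ν₁.rnDeriv μ ≤ᵐ[μ] ν₂.rnDeriv μ := by
  refine ae_le_of_forall_setLIntegral_le_of_sigmaFinite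
    (Measure.measurable_rnDeriv _ _) fun s hs _ ↦ ?_
  rw [Measure.setLIntegral_rnDeriv' h₁ hs, Measure.setLIntegral_rnDeriv' h₂ hs]
  exact h s

/-- Pointwise real algebra for the mixture coefficient. -/
lemma mix_coeff_aux {a b c : ℝ} (hmin : min a b ≤ c) (hmax : c ≤ max a b) :
    (1 - max 0 (min 1 ((c - a) / (b - a)))) * a
      + max 0 (min 1 ((c - a) / (b - a))) * b = c := by
  rcases lt_trichotomy a b with hab | hab | hab
  · have h1 : a ≤ c := le_trans (by simp [min_eq_left hab.le]) hmin
    have h2 : c ≤ b := le_trans hmax (by simp [max_eq_right hab.le])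
    have hba : 0 < b - a := by linarith
    have hr0 : 0 ≤ (c - a) / (b - a) := div_nonneg (by linarith) hba.le
    have hr1 : (c - a) / (b - a) ≤ 1 := by
      rw [div_le_one hba]; linarith
    rw [min_eq_right hr1, max_eq_right hr0]
    field_simp
    ring
  · subst hab
    have h1 : a ≤ c := by simpa using hmin
    have h2 : c ≤ a := by simpa using hmax
    have : c = a := le_antisymm h2 h1
    simp [this]
  · have h1 : b ≤ c := le_trans (by simp [min_eq_right hab.le]) hmin
    have h2 : c ≤ a := le_trans hmax (by simp [max_eq_left hab.le])
    have hba : b - a < 0 := by linarith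
    have heq : (c - a) / (b - a) = (a - c) / (a - b) := by
      rw [← neg_div_neg_eq]; ring_nf
    have hab' : 0 < a - b := by linarith
    have hr0 : 0 ≤ (c - a) / (b - a) := by
      rw [heq]; exact div_nonneg (by linarith) hab'.le
    have hr1 : (c - a) / (b - a) ≤ 1 := by
      rw [heq, div_le_one hab']; linarith
    rw [min_eq_right hr1, max_eq_right hr0, heq]
    field_simp
    ring

/-- Any finite measure `μ₁'` in the order interval
`[μ₁ ⊓ μ₂, μ₁ ⊔ μ₂]` is a convex mixture of `μ₁` and `μ₂` with a measurable
density `h` valued in `[0, 1]`. -/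
theorem orderInterval_measure_density
    {S : Type*} [MeasurableSpace S]
    (μ₁ μ₂ μ₁' : Measure S)
    [IsFiniteMeasure μ₁] [IsFiniteMeasure μ₂] [IsFiniteMeasure μ₁']
    (hlow : μ₁ ⊓ μ₂ ≤ μ₁') (hup : μ₁' ≤ μ₁ ⊔ μ₂) :
    ∃ h : S → ℝ, Measurable h ∧ (∀ s, 0 ≤ h s ∧ h s ≤ 1) ∧
      ∀ A : Set S, MeasurableSet A →
        μ₁' A = ∫⁻ x in A, ENNReal.ofReal (1 - h x) ∂μ₁ +
          ∫⁻ x in A, ENNReal.ofReal (h x) ∂μ₂ := by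
  set μ : Measure S := μ₁ + μ₂ with hμ
  have hsup_le : μ₁ ⊔ μ₂ ≤ μ :=
    sup_le (Measure.le_add_right le_rfl) (Measure.le_add_left le_rfl)
  have h₁ : μ₁ ≪ μ := (Measure.absolutelyContinuous_of_le (Measure.le_add_right le_rfl))
  have h₂ : μ₂ ≪ μ := (Measure.absolutelyContinuous_of_le (Measure.le_add_left le_rfl))
  have h₁' : μ₁' ≪ μ :=
    Measure.absolutelyContinuous_of_le (hup.trans hsup_le)
  set f₁ := μ₁.rnDeriv μ with hf₁
  set f₂ := μ₂.rnDeriv μ with hf₂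
  set g := μ₁'.rnDeriv μ with hg
  have hf₁m : Measurable f₁ := Measure.measurable_rnDeriv _ _
  have hf₂m : Measurable f₂ := Measure.measurable_rnDeriv _ _
  have hgm : Measurable g := Measure.measurable_rnDeriv _ _
  -- withDensity of min is below the infimum
  have hmin_le : μ.withDensity (fun x ↦ min (f₁ x) (f₂ x)) ≤ μ₁ ⊓ μ₂ := by
    refine le_inf ?_ ?_
    · calc μ.withDensity (fun x ↦ min (f₁ x) (f₂ x))
          ≤ μ.withDensity f₁ := withDensity_mono (Filter.Eventually.of_forall fun x ↦ min_le_left _ _)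
        _ = μ₁ := Measure.withDensity_rnDeriv_eq _ _ h₁
    · calc μ.withDensity (fun x ↦ min (f₁ x) (f₂ x))
          ≤ μ.withDensity f₂ := withDensity_mono (Filter.Eventually.of_forall fun x ↦ min_le_right _ _)
        _ = μ₂ := Measure.withDensity_rnDeriv_eq _ _ h₂
  -- withDensity of max is above the supremum
  have hle_max : μ₁ ⊔ μ₂ ≤ μ.withDensity (fun x ↦ max (f₁ x) (f₂ x)) := by
    refine sup_le ?_ ?_
    · calc μ₁ = μ.withDensity f₁ := (Measure.withDensity_rnDeriv_eq _ _ h₁).symm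
        _ ≤ μ.withDensity (fun x ↦ max (f₁ x) (f₂ x)) :=
          withDensity_mono (Filter.Eventually.of_forall fun x ↦ le_max_left _ _)
    · calc μ₂ = μ.withDensity f₂ := (Measure.withDensity_rnDeriv_eq _ _ h₂).symm
        _ ≤ μ.withDensity (fun x ↦ max (f₁ x) (f₂ x)) :=
          withDensity_mono (Filter.Eventually.of_forall fun x ↦ le_max_right _ _)
  have hminm : Measurable fun x ↦ min (f₁ x) (f₂ x) := hf₁m.min hf₂m
  have hmaxm : Measurable fun x ↦ max (f₁ x) (f₂ x) := hf₁m.max hf₂m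
  have hwd_min_fin : IsFiniteMeasure (μ.withDensity (fun x ↦ min (f₁ x) (f₂ x))) :=
    isFiniteMeasure_of_le _ (hmin_le.trans (inf_le_left.trans le_rfl))
  have hwd_max_fin : IsFiniteMeasure (μ.withDensity (fun x ↦ max (f₁ x) (f₂ x))) := by
    constructor
    rw [withDensity_apply _ MeasurableSet.univ]
    calc ∫⁻ x in Set.univ, max (f₁ x) (f₂ x) ∂μ
        ≤ ∫⁻ x in Set.univ, f₁ x + f₂ x ∂μ :=
          lintegral_mono fun x ↦ max_le (le_add_right le_rfl) (le_add_left le_rfl)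
      _ = ∫⁻ x in Set.univ, f₁ x ∂μ + ∫⁻ x in Set.univ, f₂ x ∂μ :=
          lintegral_add_left hf₁m _
      _ < ⊤ := by
          have l1 := Measure.setLIntegral_rnDeriv_le (μ := μ₁) (ν := μ) Set.univ
          have l2 := Measure.setLIntegral_rnDeriv_le (μ := μ₂) (ν := μ) Set.univ
          exact ENNReal.add_lt_top.mpr
            ⟨lt_of_le_of_lt l1 (measure_lt_top _ _), lt_of_le_of_lt l2 (measure_lt_top _ _)⟩
  -- a.e. bounds on g
  have hlow' : (fun x ↦ min (f₁ x) (f₂ x)) ≤ᵐ[μ] g := by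
    have := rnDeriv_mono_aux (μ.withDensity (fun x ↦ min (f₁ x) (f₂ x))) μ₁' μ
      (hmin_le.trans hlow) (withDensity_absolutelyContinuous _ _) h₁'
    filter_upwards [this, Measure.rnDeriv_withDensity μ hminm] with x hx hx2
    rw [← hx2]; exact hx
  have hup' : g ≤ᵐ[μ] fun x ↦ max (f₁ x) (f₂ x) := by
    have := rnDeriv_mono_aux μ₁' (μ.withDensity (fun x ↦ max (f₁ x) (f₂ x))) μ
      (hup.trans hle_max) h₁' (withDensity_absolutelyContinuous _ _)
    filter_upwards [this, Measure.rnDeriv_withDensity μ hmaxm] with x hx hx2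
    rw [hx2] at hx; exact hx
  -- define the density
  set h : S → ℝ := fun x ↦
    max 0 (min 1 (((g x).toReal - (f₁ x).toReal) / ((f₂ x).toReal - (f₁ x).toReal))) with hh
  have hhm : Measurable h := by
    apply Measurable.max measurable_const
    apply Measurable.min measurable_const
    exact (hgm.ennreal_toReal.sub hf₁m.ennreal_toReal).div
      (hf₂m.ennreal_toReal.sub hf₁m.ennreal_toReal)
  have hh01 : ∀ s, 0 ≤ h s ∧ h s ≤ 1 :=
    fun s ↦ ⟨le_max_left _ _, max_le zero_le_one (min_le_left _ _)⟩
  refine ⟨h, hhm, hh01, fun A hA ↦ ?_⟩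
  -- the key a.e. identity
  have key : (fun x ↦ f₁ x * ENNReal.ofReal (1 - h x) + f₂ x * ENNReal.ofReal (h x))
      =ᵐ[μ] g := by
    filter_upwards [hlow', hup', Measure.rnDeriv_ne_top μ₁ μ, Measure.rnDeriv_ne_top μ₂ μ,
      Measure.rnDeriv_ne_top μ₁' μ] with x hx1 hx2 hxf₁ hxf₂ hxg
    have ha : f₁ x = ENNReal.ofReal (f₁ x).toReal := (ENNReal.ofReal_toReal hxf₁).symm
    have hb : f₂ x = ENNReal.ofReal (f₂ x).toReal := (ENNReal.ofReal_toReal hxf₂).symm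
    have hc : g x = ENNReal.ofReal (g x).toReal := (ENNReal.ofReal_toReal hxg).symm
    set a := (f₁ x).toReal
    set b := (f₂ x).toReal
    set c := (g x).toReal
    have hmin : min a b ≤ c := by
      rcases min_le_iff.mp (le_refl (min (f₁ x) (f₂ x))) with _
      have : min (f₁ x) (f₂ x) ≤ g x := hx1
      calc min a b = (min (f₁ x) (f₂ x)).toReal := by
            rcases le_total (f₁ x) (f₂ x) with hle | hle
            · rw [min_eq_left hle, min_eq_left (ENNReal.toReal_mono hxf₂ hle)]
            · rw [min_eq_right hle, min_eq_right (ENNReal.toReal_mono hxf₁ hle)]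
        _ ≤ c := ENNReal.toReal_mono hxg this
    have hmax : c ≤ max a b := by
      have : g x ≤ max (f₁ x) (f₂ x) := hx2
      calc c ≤ (max (f₁ x) (f₂ x)).toReal := by
            rcases le_total (f₁ x) (f₂ x) with hle | hle
            · rw [max_eq_right hle]
              exact ENNReal.toReal_mono hxf₂ (this.trans_eq (max_eq_right hle))
            · rw [max_eq_left hle]
              exact ENNReal.toReal_mono hxf₁ (this.trans_eq (max_eq_left hle))
        _ = max a b := by
            rcases le_total (f₁ x) (f₂ x) with hle | hle
            · rw [max_eq_right hle, max_eq_right (ENNReal.toReal_mono hxf₂ hle)]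
            · rw [max_eq_left hle, max_eq_left (ENNReal.toReal_mono hxf₁ hle)]
    have hmix : (1 - h x) * a + h x * b = c := mix_coeff_aux hmin hmax
    have ha0 : 0 ≤ a := ENNReal.toReal_nonneg
    have hb0 : 0 ≤ b := ENNReal.toReal_nonneg
    have hhx := hh01 x
    rw [ha, hb, hc, ← ENNReal.ofReal_mul' (by linarith [hhx.2]),
      ← ENNReal.ofReal_mul' hhx.1,
      ← ENNReal.ofReal_add (mul_nonneg ha0 (by linarith [hhx.2])) (mul_nonneg hb0 hhx.1)]
    congr 1
    linarith [hmix]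
  have hint1 : ∫⁻ x in A, f₁ x * ENNReal.ofReal (1 - h x) ∂μ
      = ∫⁻ x in A, ENNReal.ofReal (1 - h x) ∂μ₁ :=
    setLIntegral_rnDeriv_mul h₁
      ((measurable_const.sub hhm).ennreal_ofReal).aemeasurable hA
  have hint2 : ∫⁻ x in A, f₂ x * ENNReal.ofReal (h x) ∂μ
      = ∫⁻ x in A, ENNReal.ofReal (h x) ∂μ₂ :=
    setLIntegral_rnDeriv_mul h₂ (hhm.ennreal_ofReal).aemeasurable hA
  calc μ₁' A = ∫⁻ x in A, g x ∂μ := (Measure.setLIntegral_rnDeriv' h₁' hA).symm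
    _ = ∫⁻ x in A, (f₁ x * ENNReal.ofReal (1 - h x) + f₂ x * ENNReal.ofReal (h x)) ∂μ :=
        lintegral_congr_ae (ae_restrict_of_ae key.symm)
    _ = ∫⁻ x in A, f₁ x * ENNReal.ofReal (1 - h x) ∂μ
          + ∫⁻ x in A, f₂ x * ENNReal.ofReal (h x) ∂μ :=
        lintegral_add_left (hf₁m.mul ((measurable_const.sub hhm).ennreal_ofReal)) _
    _ = ∫⁻ x in A, ENNReal.ofReal (1 - h x) ∂μ₁ + ∫⁻ x in A, ENNReal.ofReal (h x) ∂μ₂ := by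
        rw [hint1, hint2]
end

section
/- Let Ω be a Polish (or general measurable) space, let m be a finite positive Borel measure on Ω, and let f : ℝ → ℝ be convex and nonnegative with f defined on [0, ∞). Define the internal energy H(μ) = ∫⁻ ENNReal.ofReal (f((∂μ/∂m)(x).toReal)) dm(x) ∈ [0, ∞] for a finite measure μ absolutely continuous with respect to m, where ∂μ/∂m is the Radon–Nikodym derivative. Let μ₁, μ₂ be finite measures with μ₁ ≪ m and μ₂ ≪ m, and let μ₁', μ₂' be finite measures such that μ₁ ⊓ μ₂ ≤ μ₁' ≤ μ₁ ⊔ μ₂, μ₁ ⊓ μ₂ ≤ μ₂' ≤ μ₁ ⊔ μ₂, and μ₁' + μ₂' = μ₁ + μ₂ (so μ₁', μ₂' ≪ m as well). Then H(μ₁') + H(μ₂') ≤ H(μ₁) + H(μ₂) in [0, ∞]. (This is the total substitutability of the internal energy H_{f,m}.) -/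
/-!
Write `gᵢ`, `gᵢ'` for the densities of `μᵢ`, `μᵢ'` with respect to `m`. The order constraints
give `gᵢ' ≤ max g₁ g₂` a.e., and `μ₁' + μ₂' = μ₁ + μ₂` gives `g₁' + g₂' = g₁ + g₂` a.e. Hence
pointwise the pair `(g₁', g₂')` lies between `g₁` and `g₂` with the same sum, i.e. it is less
spread out, and convexity of `f` yields `f g₁' + f g₂' ≤ f g₁ + f g₂`; integrate against `m`.
-/

open MeasureTheory Set

section Convex

variable {s : Set ℝ} {f : ℝ → ℝ} {a b x y : ℝ}

theorem ConvexOn.map_add_map_le_of_add_eq (hf : ConvexOn ℝ s f) (ha : a ∈ s) (hb : b ∈ s)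
    (hax : a ≤ x) (hxb : x ≤ b) (hxy : x + y = a + b) : f x + f y ≤ f a + f b := by
  rcases (hax.trans hxb).eq_or_lt with rfl | hab
  · obtain rfl : x = a := le_antisymm hxb hax
    obtain rfl : y = x := by linarith
    rfl
  set t := (b - x) / (b - a)
  have ht : t * (b - a) = b - x := div_mul_cancel₀ _ (sub_ne_zero.2 hab.ne')
  have ht₀ : 0 ≤ t := div_nonneg (by linarith) (by linarith)
  have ht₁ : t ≤ 1 := div_le_one_of_le₀ (by linarith) (by linarith)
  have hx := hf.2 ha hb ht₀ (sub_nonneg.2 ht₁) (add_sub_cancel t 1)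
  have hy := hf.2 ha hb (sub_nonneg.2 ht₁) ht₀ (sub_add_cancel 1 t)
  simp only [smul_eq_mul] at hx hy
  rw [show t * a + (1 - t) * b = x by linear_combination -ht] at hx
  rw [show (1 - t) * a + t * b = y by linear_combination ht - hxy] at hy
  linarith

theorem ConvexOn.map_add_map_le_of_le_max (hf : ConvexOn ℝ s f) (ha : a ∈ s) (hb : b ∈ s)
    (hx : x ≤ max a b) (hy : y ≤ max a b) (hxy : x + y = a + b) : f x + f y ≤ f a + f b := by
  rcases le_total a b with hab | hba
  · rw [max_eq_right hab] at hx hy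
    exact hf.map_add_map_le_of_add_eq ha hb (by linarith) hx hxy
  · rw [max_eq_left hba] at hx hy
    rw [add_comm (f a)]
    exact hf.map_add_map_le_of_add_eq hb ha (by linarith) hx (by linarith)

-- `ENNReal.ofReal ∘ f` only sees the positive part `f ⊔ 0`, which is again convex.
theorem ConvexOn.ofReal_add_ofReal_le_of_le_max (hf : ConvexOn ℝ s f) (ha : a ∈ s) (hb : b ∈ s)
    (hx : x ≤ max a b) (hy : y ≤ max a b) (hxy : x + y = a + b) :
    ENNReal.ofReal (f x) + ENNReal.ofReal (f y) ≤
      ENNReal.ofReal (f a) + ENNReal.ofReal (f b) := by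
  have hpos := (hf.sup (convexOn_const 0 hf.1)).map_add_map_le_of_le_max ha hb hx hy hxy
  simp only [Pi.sup_apply] at hpos
  have key := ENNReal.ofReal_le_ofReal hpos
  rw [ENNReal.ofReal_add (le_max_right _ _) (le_max_right _ _),
    ENNReal.ofReal_add (le_max_right _ _) (le_max_right _ _)] at key
  simpa only [ENNReal.ofReal_max, ENNReal.ofReal_zero, max_eq_left zero_le] using key

theorem ConvexOn.ofReal_add_ofReal_toReal_le (hf : ConvexOn ℝ (Ici 0) f)
    {a b x y : ENNReal} (ha : a ≠ ⊤) (hb : b ≠ ⊤) (hx : x ≤ max a b) (hy : y ≤ max a b)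
    (hxy : x + y = a + b) :
    ENNReal.ofReal (f x.toReal) + ENNReal.ofReal (f y.toReal) ≤
      ENNReal.ofReal (f a.toReal) + ENNReal.ofReal (f b.toReal) := by
  have hmax : max a b ≠ ⊤ := max_ne_top ha hb
  refine hf.ofReal_add_ofReal_le_of_le_max ENNReal.toReal_nonneg ENNReal.toReal_nonneg ?_ ?_ ?_
  · exact ENNReal.toReal_max ha hb ▸ ENNReal.toReal_mono hmax hx
  · exact ENNReal.toReal_max ha hb ▸ ENNReal.toReal_mono hmax hy
  · rw [← ENNReal.toReal_add (ne_top_of_le_ne_top hmax hx) (ne_top_of_le_ne_top hmax hy),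
      hxy, ENNReal.toReal_add ha hb]

-- `f` is continuous on `(0, ∞)`, so it is measurable once its value at `0` is split off.
theorem ConvexOn.measurable_comp_of_nonneg {α : Type*} [MeasurableSpace α]
    (hf : ConvexOn ℝ (Ici 0) f) {g : α → ℝ} (hg : Measurable g) (hg₀ : ∀ x, 0 ≤ g x) :
    Measurable fun x => f (g x) := by
  have hcont : ContinuousOn f (Ioi 0) := interior_Ici (a := (0 : ℝ)) ▸ hf.continuousOn_interior
  have hF := hcont.measurable_piecewise continuousOn_const measurableSet_Ioi (g := fun _ => f 0)
  convert hF.comp hg using 2 with x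
  rcases (hg₀ x).eq_or_lt with h | h
  · simp [Set.piecewise, ← h]
  · simp [Set.piecewise, h]

end Convex

namespace MeasureTheory.Measure

variable {α : Type*} [MeasurableSpace α]

theorem rnDeriv_le_of_le_withDensity {μ m : Measure α} [SigmaFinite m] {g : α → ENNReal}
    (h : μ ≤ m.withDensity g) : μ.rnDeriv m ≤ᵐ[m] g :=
  ae_le_of_forall_setLIntegral_le_of_sigmaFinite₀ (μ.measurable_rnDeriv m).aemeasurable
    fun s hs _ => (setLIntegral_rnDeriv_le s).trans ((h s).trans_eq (withDensity_apply _ hs))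

theorem sup_le_withDensity_rnDeriv_sup {μ₁ μ₂ m : Measure α}
    [μ₁.HaveLebesgueDecomposition m] [μ₂.HaveLebesgueDecomposition m]
    (h₁ : μ₁ ≪ m) (h₂ : μ₂ ≪ m) : μ₁ ⊔ μ₂ ≤ m.withDensity (μ₁.rnDeriv m ⊔ μ₂.rnDeriv m) :=
  sup_le ((withDensity_rnDeriv_eq μ₁ m h₁).symm.trans_le
      (withDensity_mono (ae_of_all _ fun _ => le_sup_left)))
    ((withDensity_rnDeriv_eq μ₂ m h₂).symm.trans_le
      (withDensity_mono (ae_of_all _ fun _ => le_sup_right)))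

end MeasureTheory.Measure

theorem internalEnergy_totallySubstitutable_general
    {Ω : Type*} [MeasurableSpace Ω]
    (m : Measure Ω) [IsFiniteMeasure m]
    (f : ℝ → ℝ) (hconv : ConvexOn ℝ (Set.Ici 0) f)
    (μ₁ μ₂ μ₁' μ₂' : Measure Ω)
    [IsFiniteMeasure μ₁] [IsFiniteMeasure μ₂]
    [IsFiniteMeasure μ₁'] [IsFiniteMeasure μ₂']
    (hac₁ : μ₁ ≪ m) (hac₂ : μ₂ ≪ m)
    (h₁u : μ₁' ≤ μ₁ ⊔ μ₂)
    (h₂u : μ₂' ≤ μ₁ ⊔ μ₂)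
    (hsum : μ₁' + μ₂' = μ₁ + μ₂) :
    (∫⁻ x, ENNReal.ofReal (f ((μ₁'.rnDeriv m x).toReal)) ∂m) +
      (∫⁻ x, ENNReal.ofReal (f ((μ₂'.rnDeriv m x).toReal)) ∂m) ≤
    (∫⁻ x, ENNReal.ofReal (f ((μ₁.rnDeriv m x).toReal)) ∂m) +
      (∫⁻ x, ENNReal.ofReal (f ((μ₂.rnDeriv m x).toReal)) ∂m) := by
  have hdom := Measure.sup_le_withDensity_rnDeriv_sup hac₁ hac₂
  have hadd : μ₁'.rnDeriv m + μ₂'.rnDeriv m =ᵐ[m] μ₁.rnDeriv m + μ₂.rnDeriv m :=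
    (Measure.rnDeriv_add μ₁' μ₂' m).symm.trans (hsum ▸ Measure.rnDeriv_add μ₁ μ₂ m)
  have hpointwise : (fun x => ENNReal.ofReal (f (μ₁'.rnDeriv m x).toReal) +
        ENNReal.ofReal (f (μ₂'.rnDeriv m x).toReal)) ≤ᵐ[m]
      fun x => ENNReal.ofReal (f (μ₁.rnDeriv m x).toReal) +
        ENNReal.ofReal (f (μ₂.rnDeriv m x).toReal) := by
    filter_upwards [Measure.rnDeriv_le_of_le_withDensity (h₁u.trans hdom),
      Measure.rnDeriv_le_of_le_withDensity (h₂u.trans hdom), hadd,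
      Measure.rnDeriv_lt_top μ₁ m, Measure.rnDeriv_lt_top μ₂ m] with x h₁ h₂ hx ht₁ ht₂
    exact hconv.ofReal_add_ofReal_toReal_le ht₁.ne ht₂.ne h₁ h₂ hx
  have hmeas : Measurable fun x => ENNReal.ofReal (f (μ₁.rnDeriv m x).toReal) :=
    ENNReal.measurable_ofReal.comp <| hconv.measurable_comp_of_nonneg
      (μ₁.measurable_rnDeriv m).ennreal_toReal fun _ => ENNReal.toReal_nonneg
  calc _ ≤ ∫⁻ x, (ENNReal.ofReal (f (μ₁'.rnDeriv m x).toReal) +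
          ENNReal.ofReal (f (μ₂'.rnDeriv m x).toReal)) ∂m := le_lintegral_add _ _
    _ ≤ ∫⁻ x, (ENNReal.ofReal (f (μ₁.rnDeriv m x).toReal) +
          ENNReal.ofReal (f (μ₂.rnDeriv m x).toReal)) ∂m := lintegral_mono_ae hpointwise
    _ = _ := lintegral_add_left hmeas _

/-- Total substitutability of the internal energy
`H(μ) = ∫⁻ ofReal (f (dμ/dm)) dm` for a convex nonnegative `f`. -/
theorem internalEnergy_totallySubstitutable
    {Ω : Type*} [MeasurableSpace Ω]
    (m : Measure Ω) [IsFiniteMeasure m]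
    (f : ℝ → ℝ) (hconv : ConvexOn ℝ (Set.Ici 0) f)
    (hnonneg : ∀ s : ℝ, 0 ≤ s → 0 ≤ f s)
    (μ₁ μ₂ μ₁' μ₂' : Measure Ω)
    [IsFiniteMeasure μ₁] [IsFiniteMeasure μ₂]
    [IsFiniteMeasure μ₁'] [IsFiniteMeasure μ₂']
    (hac₁ : μ₁ ≪ m) (hac₂ : μ₂ ≪ m)
    (h₁l : μ₁ ⊓ μ₂ ≤ μ₁') (h₁u : μ₁' ≤ μ₁ ⊔ μ₂)
    (h₂l : μ₁ ⊓ μ₂ ≤ μ₂') (h₂u : μ₂' ≤ μ₁ ⊔ μ₂)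
    (hsum : μ₁' + μ₂' = μ₁ + μ₂) :
    (∫⁻ x, ENNReal.ofReal (f ((μ₁'.rnDeriv m x).toReal)) ∂m) +
      (∫⁻ x, ENNReal.ofReal (f ((μ₂'.rnDeriv m x).toReal)) ∂m) ≤
    (∫⁻ x, ENNReal.ofReal (f ((μ₁.rnDeriv m x).toReal)) ∂m) +
      (∫⁻ x, ENNReal.ofReal (f ((μ₂.rnDeriv m x).toReal)) ∂m) :=
  internalEnergy_totallySubstitutable_general m f hconv μ₁ μ₂ μ₁' μ₂' hac₁ hac₂ h₁u h₂u hsum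
end

section
/- Let Ω, Ω* be compact metric spaces with Ω nonempty, let c : Ω × Ω* → ℝ be continuous, and let ν be a Borel probability measure on Ω*. Define K₀ : C(Ω, ℝ) → ℝ by K₀(φ) = ∫_{Ω*} φ^c dν, where φ^c(y) = ⨆_{x ∈ Ω} (φ(x) − c(x, y)) is the c-transform. Then: (1) K₀ is submodular, i.e. K₀(φ₁ ⊓ φ₂) + K₀(φ₁ ⊔ φ₂) ≤ K₀(φ₁) + K₀(φ₂) for all φ₁, φ₂ ∈ C(Ω, ℝ), where ⊓, ⊔ are the pointwise min and max; (2) K₀ is convex; (3) K₀ is 1-Lipschitz for the supremum norm: |K₀(φ₁) − K₀(φ₂)| ≤ ‖φ₁ − φ₂‖_∞. -/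
/-!
For fixed `y`, `φ^c(y)` is the supremum over `x` of the affine functionals `φ ↦ φ x - c (x, y)`,
a bounded family since `Ω` is compact. Such a supremum is convex and moves by at most
`‖φ₁ - φ₂‖`; it is submodular because it commutes with `⊔`, is at most `min` on `⊓`, and
`min + max` is the sum. Integrating these pointwise inequalities against `ν` gives the claims.
-/

open MeasureTheory

theorem ciSup_inf_add_ciSup_sup_le {ι : Type*} {f g : ι → ℝ} (hf : BddAbove (Set.range f))
    (hg : BddAbove (Set.range g)) :
    (⨆ i, f i ⊓ g i) + ⨆ i, f i ⊔ g i ≤ (⨆ i, f i) + ⨆ i, g i := by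
  have hinf : ⨆ i, f i ⊓ g i ≤ (⨆ i, f i) ⊓ ⨆ i, g i :=
    le_inf (ciSup_mono hf fun _ => inf_le_left) (ciSup_mono hg fun _ => inf_le_right)
  rw [ciSup_sup_eq hf hg]
  linarith [min_add_max (⨆ i, f i) (⨆ i, g i)]

section CTransform

variable {X Y : Type*} [TopologicalSpace X] [CompactSpace X] [TopologicalSpace Y]
  {c : X × Y → ℝ}

noncomputable def cTransform (c : X × Y → ℝ) (φ : C(X, ℝ)) (y : Y) : ℝ :=
  ⨆ x, φ x - c (x, y)

theorem bddAbove_range_sub_cost (hc : Continuous c) (φ : C(X, ℝ)) (y : Y) :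
    BddAbove (Set.range fun x => φ x - c (x, y)) :=
  (isCompact_range (by fun_prop)).bddAbove

theorem sub_cost_le_cTransform (hc : Continuous c) (φ : C(X, ℝ)) (x : X) (y : Y) :
    φ x - c (x, y) ≤ cTransform c φ y :=
  le_ciSup (bddAbove_range_sub_cost hc φ y) x

theorem continuous_cTransform (hc : Continuous c) (φ : C(X, ℝ)) :
    Continuous (cTransform c φ) := by
  have h : Continuous fun y => sSup ((fun x => φ x - c (x, y)) '' Set.univ) :=
    isCompact_univ.continuous_sSup (by fun_prop)
  simp only [Set.image_univ] at h
  exact h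

theorem cTransform_inf_add_cTransform_sup_le (hc : Continuous c) (φ₁ φ₂ : C(X, ℝ)) (y : Y) :
    cTransform c (φ₁ ⊓ φ₂) y + cTransform c (φ₁ ⊔ φ₂) y ≤
      cTransform c φ₁ y + cTransform c φ₂ y := by
  simp only [cTransform, ContinuousMap.inf_apply, ContinuousMap.sup_apply, ← min_sub_sub_right,
    ← max_sub_sub_right]
  exact ciSup_inf_add_ciSup_sup_le (bddAbove_range_sub_cost hc φ₁ y)
    (bddAbove_range_sub_cost hc φ₂ y)

variable [Nonempty X]

theorem cTransform_convex_combination_le (hc : Continuous c) (φ₁ φ₂ : C(X, ℝ)) {a b : ℝ}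
    (ha : 0 ≤ a) (hb : 0 ≤ b) (hab : a + b = 1) (y : Y) :
    cTransform c (a • φ₁ + b • φ₂) y ≤ a * cTransform c φ₁ y + b * cTransform c φ₂ y := by
  refine ciSup_le fun x => ?_
  calc (a • φ₁ + b • φ₂) x - c (x, y) = a * (φ₁ x - c (x, y)) + b * (φ₂ x - c (x, y)) := by
        simp only [ContinuousMap.add_apply, ContinuousMap.smul_apply, smul_eq_mul]
        linear_combination c (x, y) * hab
    _ ≤ a * cTransform c φ₁ y + b * cTransform c φ₂ y := by
        gcongr <;> exact sub_cost_le_cTransform hc _ x y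

theorem cTransform_le_add_norm_sub (hc : Continuous c) (φ₁ φ₂ : C(X, ℝ)) (y : Y) :
    cTransform c φ₁ y ≤ cTransform c φ₂ y + ‖φ₁ - φ₂‖ := by
  refine ciSup_le fun x => ?_
  have hdiff : φ₁ x - φ₂ x ≤ ‖φ₁ - φ₂‖ :=
    (le_abs_self _).trans ((φ₁ - φ₂).norm_coe_le_norm x)
  linarith [sub_cost_le_cTransform hc φ₂ x y]

end CTransform

section CTransformIntegral

variable {X Y : Type*} [TopologicalSpace X] [CompactSpace X] [TopologicalSpace Y]
  [CompactSpace Y] [MeasurableSpace Y] [OpensMeasurableSpace Y] {c : X × Y → ℝ}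
  (ν : Measure Y)

noncomputable def cTransformIntegral (c : X × Y → ℝ) (ν : Measure Y) (φ : C(X, ℝ)) : ℝ :=
  ∫ y, cTransform c φ y ∂ν

theorem integrable_cTransform [IsFiniteMeasure ν] (hc : Continuous c) (φ : C(X, ℝ)) :
    Integrable (cTransform c φ) ν :=
  (continuous_cTransform hc φ).integrable_of_hasCompactSupport (.of_compactSpace _)

theorem cTransformIntegral_inf_add_sup_le [IsFiniteMeasure ν] (hc : Continuous c)
    (φ₁ φ₂ : C(X, ℝ)) :
    cTransformIntegral c ν (φ₁ ⊓ φ₂) + cTransformIntegral c ν (φ₁ ⊔ φ₂) ≤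
      cTransformIntegral c ν φ₁ + cTransformIntegral c ν φ₂ := by
  have hint := integrable_cTransform ν hc
  simp only [cTransformIntegral, ← integral_add (hint _) (hint _)]
  exact integral_mono ((hint _).add (hint _)) ((hint _).add (hint _))
    (cTransform_inf_add_cTransform_sup_le hc φ₁ φ₂)

variable [Nonempty X]

theorem convexOn_cTransformIntegral [IsFiniteMeasure ν] (hc : Continuous c) :
    ConvexOn ℝ Set.univ (cTransformIntegral c ν) := by
  refine ⟨convex_univ, fun φ₁ _ φ₂ _ a b ha hb hab => ?_⟩
  have hint := integrable_cTransform ν hc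
  have hcomb : Integrable (fun y => a * cTransform c φ₁ y + b * cTransform c φ₂ y) ν :=
    ((hint φ₁).const_mul a).add ((hint φ₂).const_mul b)
  calc cTransformIntegral c ν (a • φ₁ + b • φ₂)
      ≤ ∫ y, (a * cTransform c φ₁ y + b * cTransform c φ₂ y) ∂ν :=
        integral_mono (hint _) hcomb (cTransform_convex_combination_le hc φ₁ φ₂ ha hb hab)
    _ = a • cTransformIntegral c ν φ₁ + b • cTransformIntegral c ν φ₂ := by
        rw [integral_add ((hint φ₁).const_mul a) ((hint φ₂).const_mul b), integral_const_mul,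
          integral_const_mul]
        rfl

theorem cTransformIntegral_sub_le [IsProbabilityMeasure ν] (hc : Continuous c)
    (φ₁ φ₂ : C(X, ℝ)) :
    cTransformIntegral c ν φ₁ - cTransformIntegral c ν φ₂ ≤ ‖φ₁ - φ₂‖ := by
  have hint := integrable_cTransform ν hc
  have h : cTransformIntegral c ν φ₁ ≤ ∫ y, (cTransform c φ₂ y + ‖φ₁ - φ₂‖) ∂ν :=
    integral_mono (hint _) ((hint _).add (integrable_const _))
      (cTransform_le_add_norm_sub hc φ₁ φ₂)
  rw [integral_add (hint _) (integrable_const _), integral_const, probReal_univ, one_smul] at h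
  exact sub_le_iff_le_add'.mpr h

theorem abs_cTransformIntegral_sub_le [IsProbabilityMeasure ν] (hc : Continuous c)
    (φ₁ φ₂ : C(X, ℝ)) :
    |cTransformIntegral c ν φ₁ - cTransformIntegral c ν φ₂| ≤ ‖φ₁ - φ₂‖ :=
  abs_sub_le_iff.mpr ⟨cTransformIntegral_sub_le ν hc φ₁ φ₂,
    norm_sub_rev φ₁ φ₂ ▸ cTransformIntegral_sub_le ν hc φ₂ φ₁⟩

end CTransformIntegral

/-- The dual optimal-transport functional
`K₀(φ) = ∫ φ^c dν`, where `φ^c(y) = ⨆ x, (φ x − c (x, y))` is the c-transform,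
is submodular, convex and 1-Lipschitz on `C(Ω, ℝ)`. -/
theorem cTransform_functional_submodular_convex_lipschitz
    {Ω Ωs : Type*} [MetricSpace Ω] [CompactSpace Ω] [Nonempty Ω]
    [MetricSpace Ωs] [CompactSpace Ωs] [MeasurableSpace Ωs] [BorelSpace Ωs]
    (c : Ω × Ωs → ℝ) (hc : Continuous c)
    (ν : Measure Ωs) [IsProbabilityMeasure ν]
    (K₀ : C(Ω, ℝ) → ℝ)
    (hK₀ : ∀ φ : C(Ω, ℝ), K₀ φ = ∫ y, (⨆ x : Ω, (φ x - c (x, y))) ∂ν) :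
    (∀ φ₁ φ₂ : C(Ω, ℝ), K₀ (φ₁ ⊓ φ₂) + K₀ (φ₁ ⊔ φ₂) ≤ K₀ φ₁ + K₀ φ₂) ∧
      ConvexOn ℝ Set.univ K₀ ∧
      (∀ φ₁ φ₂ : C(Ω, ℝ), |K₀ φ₁ - K₀ φ₂| ≤ ‖φ₁ - φ₂‖) := by
  obtain rfl : K₀ = cTransformIntegral c ν := funext hK₀
  exact ⟨cTransformIntegral_inf_add_sup_le ν hc, convexOn_cTransformIntegral ν hc,
    abs_cTransformIntegral_sub_le ν hc⟩
end

section
/- Let Ω, Ω* be compact metric spaces with Ω nonempty, let c : Ω × Ω* → ℝ be continuous, let ε > 0, let α be a nonzero finite positive Borel measure on Ω, and let ν be a Borel probability measure on Ω*. Define the soft c-transform L_{c,ε}(φ)(y) = ε · log(∫_Ω exp((φ(x) − c(x, y))/ε) dα(x)) and K_ε : C(Ω, ℝ) → ℝ by K_ε(φ) = ∫_{Ω*} L_{c,ε}(φ)(y) dν(y). Then: (1) K_ε is submodular, i.e. K_ε(φ₁ ⊓ φ₂) + K_ε(φ₁ ⊔ φ₂) ≤ K_ε(φ₁) + K_ε(φ₂)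 for all φ₁, φ₂ ∈ C(Ω, ℝ) with ⊓, ⊔ the pointwise min and max; (2) K_ε is convex; (3) K_ε is 1-Lipschitz for the supremum norm. -/
/-!
For fixed `y`, `L_{c,ε}(φ)(y)` is `ε` times the log-partition function `Λ(f) = log ∫ exp f dα`
at `f = (φ - c(·, y)) / ε`, so it suffices to prove the three properties for `Λ` and integrate
in `y`. Submodularity: the integrals `A, B, P, Q` of `exp (f ⊓ g)`, `exp (f ⊔ g)`, `exp f`,
`exp g` satisfy `A + B = P + Q` and `A ≤ P, Q`, hence `A * B ≤ P * Q`. Convexity is Hölder's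
inequality with exponents `1 / a` and `1 / b`; the Lipschitz bound follows from
`exp f ≤ exp C * exp g` whenever `f ≤ g + C`.
-/

open MeasureTheory Real

theorem log_add_log_le_of_add_eq {A B P Q : ℝ} (hA : 0 < A) (hB : 0 < B) (hAP : A ≤ P)
    (hAQ : A ≤ Q) (hsum : A + B = P + Q) : log A + log B ≤ log P + log Q := by
  have hP : 0 < P := hA.trans_le hAP
  have hQ : 0 < Q := hA.trans_le hAQ
  rw [← log_mul hA.ne' hB.ne', ← log_mul hP.ne' hQ.ne']
  -- `P * Q - A * B = (P - A) * (Q - A)`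
  exact log_le_log (mul_pos hA hB)
    (by nlinarith [mul_nonneg (sub_nonneg.2 hAP) (sub_nonneg.2 hAQ)])

section LogIntegralExp

variable {X : Type*} [MeasurableSpace X] {μ : Measure X} {f g : X → ℝ}

theorem MeasureTheory.Integrable.exp_min (hf : Integrable (fun x ↦ exp (f x)) μ)
    (hg : Integrable (fun x ↦ exp (g x)) μ) : Integrable (fun x ↦ exp (min (f x) (g x))) μ :=
  (hf.inf hg).congr (.of_forall fun _ ↦ exp_monotone.map_min.symm)

theorem MeasureTheory.Integrable.exp_max (hf : Integrable (fun x ↦ exp (f x)) μ)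
    (hg : Integrable (fun x ↦ exp (g x)) μ) : Integrable (fun x ↦ exp (max (f x) (g x))) μ :=
  (hf.sup hg).congr (.of_forall fun _ ↦ exp_monotone.map_max.symm)

theorem integral_exp_min_add_integral_exp_max (hf : Integrable (fun x ↦ exp (f x)) μ)
    (hg : Integrable (fun x ↦ exp (g x)) μ) :
    ∫ x, exp (min (f x) (g x)) ∂μ + ∫ x, exp (max (f x) (g x)) ∂μ =
      ∫ x, exp (f x) ∂μ + ∫ x, exp (g x) ∂μ := by
  rw [← integral_add (hf.exp_min hg) (hf.exp_max hg), ← integral_add hf hg]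
  refine integral_congr_ae (.of_forall fun x ↦ ?_)
  simp only [exp_monotone.map_min, exp_monotone.map_max, min_add_max]

theorem log_integral_exp_min_add_log_integral_exp_max_le [NeZero μ]
    (hf : Integrable (fun x ↦ exp (f x)) μ) (hg : Integrable (fun x ↦ exp (g x)) μ) :
    log (∫ x, exp (min (f x) (g x)) ∂μ) + log (∫ x, exp (max (f x) (g x)) ∂μ) ≤
      log (∫ x, exp (f x) ∂μ) + log (∫ x, exp (g x) ∂μ) := by
  have hmin := hf.exp_min hg
  refine log_add_log_le_of_add_eq (integral_exp_pos hmin) (integral_exp_pos (hf.exp_max hg))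
    (integral_mono hmin hf fun x ↦ ?_) (integral_mono hmin hg fun x ↦ ?_)
    (integral_exp_min_add_integral_exp_max hf hg)
  · exact exp_le_exp.2 (min_le_left _ _)
  · exact exp_le_exp.2 (min_le_right _ _)

theorem log_integral_exp_le_of_le_add [NeZero μ] {C : ℝ}
    (hf : Integrable (fun x ↦ exp (f x)) μ) (hg : Integrable (fun x ↦ exp (g x)) μ)
    (hfg : ∀ x, f x ≤ g x + C) :
    log (∫ x, exp (f x) ∂μ) ≤ log (∫ x, exp (g x) ∂μ) + C := by
  have hle : ∫ x, exp (f x) ∂μ ≤ exp C * ∫ x, exp (g x) ∂μ := by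
    rw [← integral_const_mul]
    refine integral_mono hf (hg.const_mul _) fun x ↦ ?_
    simpa only [← exp_add, add_comm C] using exp_le_exp.2 (hfg x)
  calc log (∫ x, exp (f x) ∂μ) ≤ log (exp C * ∫ x, exp (g x) ∂μ) :=
        log_le_log (integral_exp_pos hf) hle
    _ = log (∫ x, exp (g x) ∂μ) + C := by
        rw [log_mul (exp_pos C).ne' (integral_exp_pos hg).ne', log_exp, add_comm]

theorem memLp_exp_mul {a : ℝ} (ha : 0 < a) (hf : Integrable (fun x ↦ exp (f x)) μ) :
    MemLp (fun x ↦ exp (a * f x)) (ENNReal.ofReal a⁻¹) μ := by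
  have hmeas : AEStronglyMeasurable (fun x ↦ exp (a * f x)) μ := by
    have : AEMeasurable f μ := by
      simpa only [log_exp] using hf.aemeasurable.log
    fun_prop
  rw [← integrable_norm_rpow_iff hmeas (by simp [ha]) ENNReal.ofReal_ne_top,
    ENNReal.toReal_ofReal (inv_nonneg.2 ha.le)]
  refine hf.congr (.of_forall fun x ↦ ?_)
  dsimp only
  rw [norm_of_nonneg (exp_pos _).le, ← exp_mul, mul_comm a, mul_inv_cancel_right₀ ha.ne']

theorem integral_exp_mul_add_mul_le {a b : ℝ} (ha : 0 < a) (hb : 0 < b) (hab : a + b = 1)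
    (hf : Integrable (fun x ↦ exp (f x)) μ) (hg : Integrable (fun x ↦ exp (g x)) μ) :
    ∫ x, exp (a * f x + b * g x) ∂μ ≤ (∫ x, exp (f x) ∂μ) ^ a * (∫ x, exp (g x) ∂μ) ^ b := by
  have hpow {t : ℝ} (ht : 0 < t) (h : X → ℝ) (x : X) : exp (t * h x) ^ t⁻¹ = exp (h x) := by
    rw [← exp_mul, mul_comm t, mul_inv_cancel_right₀ ht.ne']
  have := integral_mul_le_Lp_mul_Lq_of_nonneg (Real.HolderConjugate.inv_inv ha hb hab)
    (.of_forall fun x ↦ (exp_pos _).le) (.of_forall fun x ↦ (exp_pos _).le)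
    (memLp_exp_mul ha hf) (memLp_exp_mul hb hg)
  simpa only [← exp_add, hpow ha, hpow hb, one_div, inv_inv] using this

theorem integrable_exp_mul_add_mul {a b : ℝ} (ha : 0 < a) (hb : 0 < b)
    (hab : a + b = 1) (hf : Integrable (fun x ↦ exp (f x)) μ)
    (hg : Integrable (fun x ↦ exp (g x)) μ) :
    Integrable (fun x ↦ exp (a * f x + b * g x)) μ := by
  have := (Real.HolderConjugate.inv_inv ha hb hab).ennrealOfReal
  exact ((memLp_exp_mul ha hf).integrable_mul (memLp_exp_mul hb hg)).congr
    (.of_forall fun x ↦ (exp_add _ _).symm)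

theorem log_integral_exp_mul_add_mul_le [NeZero μ] {a b : ℝ} (ha : 0 < a) (hb : 0 < b)
    (hab : a + b = 1) (hf : Integrable (fun x ↦ exp (f x)) μ)
    (hg : Integrable (fun x ↦ exp (g x)) μ) :
    log (∫ x, exp (a * f x + b * g x) ∂μ) ≤
      a * log (∫ x, exp (f x) ∂μ) + b * log (∫ x, exp (g x) ∂μ) := by
  have hF := integral_exp_pos hf
  have hG := integral_exp_pos hg
  calc log (∫ x, exp (a * f x + b * g x) ∂μ)
      ≤ log ((∫ x, exp (f x) ∂μ) ^ a * (∫ x, exp (g x) ∂μ) ^ b) :=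
        log_le_log (integral_exp_pos (integrable_exp_mul_add_mul ha hb hab hf hg))
          (integral_exp_mul_add_mul_le ha hb hab hf hg)
    _ = a * log (∫ x, exp (f x) ∂μ) + b * log (∫ x, exp (g x) ∂μ) := by
        rw [log_mul (rpow_pos_of_pos hF a).ne' (rpow_pos_of_pos hG b).ne', log_rpow hF,
          log_rpow hG]

end LogIntegralExp

theorem convexOn_integral {Y E : Type*} [MeasurableSpace Y] {ν : Measure Y} [AddCommMonoid E]
    [Module ℝ E] {s : Set E} {F : E → Y → ℝ} (hs : Convex ℝ s) (hF : ∀ y, ConvexOn ℝ s (F · y))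
    (hint : ∀ φ ∈ s, Integrable (F φ) ν) :
    ConvexOn ℝ s fun φ ↦ ∫ y, F φ y ∂ν := by
  refine ⟨hs, fun φ₁ h₁ φ₂ h₂ a b ha hb hab ↦ ?_⟩
  calc ∫ y, F (a • φ₁ + b • φ₂) y ∂ν ≤ ∫ y, (a • F φ₁ y + b • F φ₂ y) ∂ν :=
        integral_mono (hint _ (hs h₁ h₂ ha hb hab))
          (((hint φ₁ h₁).smul a).add ((hint φ₂ h₂).smul b))
          fun y ↦ (hF y).2 h₁ h₂ ha hb hab
    _ = a • ∫ y, F φ₁ y ∂ν + b • ∫ y, F φ₂ y ∂ν := by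
        rw [integral_add (by exact (hint φ₁ h₁).smul a) (by exact (hint φ₂ h₂).smul b),
          integral_smul, integral_smul]

noncomputable def softCTransform {Ω Ωs : Type*} [TopologicalSpace Ω] [MeasurableSpace Ω]
    (c : Ω × Ωs → ℝ) (ε : ℝ) (α : Measure Ω) (φ : C(Ω, ℝ)) (y : Ωs) : ℝ :=
  ε * log (∫ x, exp ((φ x - c (x, y)) / ε) ∂α)

section SoftCTransform

variable {Ω Ωs : Type*} [TopologicalSpace Ω] [CompactSpace Ω] [MeasurableSpace Ω]
  [OpensMeasurableSpace Ω] [TopologicalSpace Ωs] {c : Ω × Ωs → ℝ} {ε : ℝ}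
  {α : Measure Ω} [IsFiniteMeasure α]

theorem integrable_exp_sub_div (hc : Continuous c) (ε : ℝ) (φ : C(Ω, ℝ)) (y : Ωs) :
    Integrable (fun x ↦ exp ((φ x - c (x, y)) / ε)) α :=
  Continuous.integrable_of_hasCompactSupport (by fun_prop) (.of_compactSpace _)

variable [NeZero α]

theorem softCTransform_inf_add_softCTransform_sup_le (hc : Continuous c) (hε : 0 < ε)
    (φ₁ φ₂ : C(Ω, ℝ)) (y : Ωs) :
    softCTransform c ε α (φ₁ ⊓ φ₂) y + softCTransform c ε α (φ₁ ⊔ φ₂) y ≤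
      softCTransform c ε α φ₁ y + softCTransform c ε α φ₂ y := by
  have hmono (x : Ω) : Monotone fun t ↦ (t - c (x, y)) / ε :=
    fun _ _ h ↦ div_le_div_of_nonneg_right (sub_le_sub_right h _) hε.le
  simp only [softCTransform, ← mul_add, ContinuousMap.inf_apply, ContinuousMap.sup_apply,
    (hmono _).map_min, (hmono _).map_max]
  exact mul_le_mul_of_nonneg_left (log_integral_exp_min_add_log_integral_exp_max_le
    (integrable_exp_sub_div hc ε φ₁ y) (integrable_exp_sub_div hc ε φ₂ y)) hε.le

theorem softCTransform_smul_add_smul_le (hc : Continuous c) (hε : 0 < ε) {a b : ℝ}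
    (ha : 0 < a) (hb : 0 < b) (hab : a + b = 1) (φ₁ φ₂ : C(Ω, ℝ)) (y : Ωs) :
    softCTransform c ε α (a • φ₁ + b • φ₂) y ≤
      a * softCTransform c ε α φ₁ y + b * softCTransform c ε α φ₂ y := by
  have hcomb (x : Ω) : ((a • φ₁ + b • φ₂) x - c (x, y)) / ε =
      a * ((φ₁ x - c (x, y)) / ε) + b * ((φ₂ x - c (x, y)) / ε) := by
    simp only [ContinuousMap.add_apply, ContinuousMap.smul_apply, smul_eq_mul]
    linear_combination (c (x, y) / ε) * hab
  have := log_integral_exp_mul_add_mul_le (μ := α) ha hb hab (integrable_exp_sub_div hc ε φ₁ y)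
    (integrable_exp_sub_div hc ε φ₂ y)
  simp only [softCTransform, hcomb]
  exact (mul_le_mul_of_nonneg_left this hε.le).trans_eq (by ring)

theorem convexOn_softCTransform (hc : Continuous c) (hε : 0 < ε) (y : Ωs) :
    ConvexOn ℝ Set.univ (softCTransform c ε α · y) :=
  convexOn_iff_forall_pos.2 ⟨convex_univ, fun _ _ _ _ _ _ ha hb hab ↦
    softCTransform_smul_add_smul_le hc hε ha hb hab _ _ y⟩

theorem softCTransform_le_add_norm_sub (hc : Continuous c) (hε : 0 < ε) (φ₁ φ₂ : C(Ω, ℝ))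
    (y : Ωs) :
    softCTransform c ε α φ₁ y ≤ softCTransform c ε α φ₂ y + ‖φ₁ - φ₂‖ := by
  have hle (x : Ω) : (φ₁ x - c (x, y)) / ε ≤ (φ₂ x - c (x, y)) / ε + ‖φ₁ - φ₂‖ / ε := by
    have : φ₁ x - φ₂ x ≤ ‖φ₁ - φ₂‖ := (le_abs_self _).trans ((φ₁ - φ₂).norm_coe_le_norm x)
    rw [← add_div]
    gcongr
    linarith
  have := log_integral_exp_le_of_le_add (integrable_exp_sub_div (α := α) hc ε φ₁ y)
    (integrable_exp_sub_div hc ε φ₂ y) hle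
  calc softCTransform c ε α φ₁ y
      ≤ ε * (log (∫ x, exp ((φ₂ x - c (x, y)) / ε) ∂α) + ‖φ₁ - φ₂‖ / ε) :=
        mul_le_mul_of_nonneg_left this hε.le
    _ = softCTransform c ε α φ₂ y + ‖φ₁ - φ₂‖ := by
        rw [softCTransform, mul_add, mul_div_cancel₀ _ hε.ne']

theorem abs_softCTransform_sub_le (hc : Continuous c) (hε : 0 < ε) (φ₁ φ₂ : C(Ω, ℝ))
    (y : Ωs) :
    |softCTransform c ε α φ₁ y - softCTransform c ε α φ₂ y| ≤ ‖φ₁ - φ₂‖ := by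
  rw [abs_sub_le_iff]
  constructor
  · linarith [softCTransform_le_add_norm_sub (α := α) hc hε φ₁ φ₂ y]
  · linarith [softCTransform_le_add_norm_sub (α := α) hc hε φ₂ φ₁ y, norm_sub_rev φ₁ φ₂]

variable [FirstCountableTopology Ωs] [LocallyCompactSpace Ωs]

theorem continuous_softCTransform (hc : Continuous c) (φ : C(Ω, ℝ)) :
    Continuous (softCTransform c ε α φ) := by
  have hint : Continuous fun y ↦ ∫ x, exp ((φ x - c (x, y)) / ε) ∂α := by
    simpa only [Measure.restrict_univ] using
      continuous_parametric_integral_of_continuous (μ := α) (by fun_prop) isCompact_univ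
  exact continuous_const.mul
    (hint.log fun y ↦ (integral_exp_pos (integrable_exp_sub_div hc ε φ y)).ne')

variable [CompactSpace Ωs] [MeasurableSpace Ωs] [OpensMeasurableSpace Ωs] (ν : Measure Ωs)

theorem integrable_softCTransform [IsFiniteMeasure ν] (hc : Continuous c) (φ : C(Ω, ℝ)) :
    Integrable (softCTransform c ε α φ) ν :=
  (continuous_softCTransform hc φ).integrable_of_hasCompactSupport (.of_compactSpace _)

theorem integral_softCTransform_inf_add_integral_softCTransform_sup_le [IsFiniteMeasure ν]
    (hc : Continuous c) (hε : 0 < ε) (φ₁ φ₂ : C(Ω, ℝ)) :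
    ∫ y, softCTransform c ε α (φ₁ ⊓ φ₂) y ∂ν + ∫ y, softCTransform c ε α (φ₁ ⊔ φ₂) y ∂ν ≤
      ∫ y, softCTransform c ε α φ₁ y ∂ν + ∫ y, softCTransform c ε α φ₂ y ∂ν := by
  have hint := integrable_softCTransform (ε := ε) (α := α) ν hc
  rw [← integral_add (hint _) (hint _), ← integral_add (hint _) (hint _)]
  exact integral_mono ((hint _).add (hint _)) ((hint _).add (hint _))
    (softCTransform_inf_add_softCTransform_sup_le hc hε φ₁ φ₂)

theorem convexOn_integral_softCTransform [IsFiniteMeasure ν] (hc : Continuous c)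
    (hε : 0 < ε) :
    ConvexOn ℝ Set.univ fun φ ↦ ∫ y, softCTransform c ε α φ y ∂ν :=
  convexOn_integral convex_univ (convexOn_softCTransform hc hε)
    fun φ _ ↦ integrable_softCTransform ν hc φ

theorem abs_integral_softCTransform_sub_le [IsProbabilityMeasure ν] (hc : Continuous c)
    (hε : 0 < ε) (φ₁ φ₂ : C(Ω, ℝ)) :
    |∫ y, softCTransform c ε α φ₁ y ∂ν - ∫ y, softCTransform c ε α φ₂ y ∂ν| ≤ ‖φ₁ - φ₂‖ := by
  rw [← integral_sub (integrable_softCTransform ν hc φ₁) (integrable_softCTransform ν hc φ₂)]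
  simpa using norm_integral_le_of_norm_le_const (μ := ν) (.of_forall fun y ↦
    (Real.norm_eq_abs _).trans_le (abs_softCTransform_sub_le hc hε φ₁ φ₂ y))

end SoftCTransform

theorem softCTransform_functional_submodular_convex_lipschitz_general
    {Ω Ωs : Type*} [MetricSpace Ω] [CompactSpace Ω]
    [MeasurableSpace Ω] [BorelSpace Ω]
    [MetricSpace Ωs] [CompactSpace Ωs] [MeasurableSpace Ωs] [BorelSpace Ωs]
    (c : Ω × Ωs → ℝ) (hc : Continuous c)
    (ε : ℝ) (hε : 0 < ε)
    (α : Measure Ω) [IsFiniteMeasure α] (hα : α ≠ 0)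
    (ν : Measure Ωs) [IsProbabilityMeasure ν]
    (Kε : C(Ω, ℝ) → ℝ)
    (hKε : ∀ φ : C(Ω, ℝ),
      Kε φ = ∫ y, ε * Real.log (∫ x, Real.exp ((φ x - c (x, y)) / ε) ∂α) ∂ν) :
    (∀ φ₁ φ₂ : C(Ω, ℝ), Kε (φ₁ ⊓ φ₂) + Kε (φ₁ ⊔ φ₂) ≤ Kε φ₁ + Kε φ₂) ∧
      ConvexOn ℝ Set.univ Kε ∧
      (∀ φ₁ φ₂ : C(Ω, ℝ), |Kε φ₁ - Kε φ₂| ≤ ‖φ₁ - φ₂‖) := by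
  have : NeZero α := ⟨hα⟩
  obtain rfl : Kε = fun φ ↦ ∫ y, softCTransform c ε α φ y ∂ν := funext hKε
  exact ⟨integral_softCTransform_inf_add_integral_softCTransform_sup_le ν hc hε,
    convexOn_integral_softCTransform ν hc hε, abs_integral_softCTransform_sub_le ν hc hε⟩

/-- The entropic dual functional
`K_ε(φ) = ∫ L_{c,ε}(φ) dν`, where
`L_{c,ε}(φ)(y) = ε log (∫ exp ((φ x − c (x, y)) / ε) dα x)` is the soft
c-transform, is submodular, convex and 1-Lipschitz on `C(Ω, ℝ)`. -/
theorem softCTransform_functional_submodular_convex_lipschitz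
    {Ω Ωs : Type*} [MetricSpace Ω] [CompactSpace Ω] [Nonempty Ω]
    [MeasurableSpace Ω] [BorelSpace Ω]
    [MetricSpace Ωs] [CompactSpace Ωs] [MeasurableSpace Ωs] [BorelSpace Ωs]
    (c : Ω × Ωs → ℝ) (hc : Continuous c)
    (ε : ℝ) (hε : 0 < ε)
    (α : Measure Ω) [IsFiniteMeasure α] (hα : α ≠ 0)
    (ν : Measure Ωs) [IsProbabilityMeasure ν]
    (Kε : C(Ω, ℝ) → ℝ)
    (hKε : ∀ φ : C(Ω, ℝ),
      Kε φ = ∫ y, ε * Real.log (∫ x, Real.exp ((φ x - c (x, y)) / ε) ∂α) ∂ν) :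
    (∀ φ₁ φ₂ : C(Ω, ℝ), Kε (φ₁ ⊓ φ₂) + Kε (φ₁ ⊔ φ₂) ≤ Kε φ₁ + Kε φ₂) ∧
      ConvexOn ℝ Set.univ Kε ∧
      (∀ φ₁ φ₂ : C(Ω, ℝ), |Kε φ₁ - Kε φ₂| ≤ ‖φ₁ - φ₂‖) :=
  softCTransform_functional_submodular_convex_lipschitz_general c hc ε hε α hα ν Kε hKε
end

section
/- Let Ω, Ω* be compact metric spaces with Ω nonempty, and let c : Ω × Ω* → ℝ be continuous. Let μ₁, μ₂ be Borel probability measures on Ω and ν a Borel probability measure on Ω*. For i = 1, 2 let φᵢ ∈ C(Ω, ℝ) be a global minimizer over C(Ω, ℝ) of φ ↦ ∫_{Ω*} φ^c dν − ∫_Ω φ dμᵢ, where φ^c(y) = sup_{x ∈ Ω} (φ(x) − c(x, y)). Suppose that at least one of the potentials is unique up to an additive constant, i.e. either every minimizer ψ for μ₁ equals φ₁ + C for some constant C ∈ ℝ, or every minimizer ψ for μ₂ equals φ₂ + C for some constant C ∈ ℝ. Let U be a Borel subset of Ω with U ≠ Ω such that μ₁(A) ≤ μ₂(A) for every Borel A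 ⊆ U and φ₁ ≤ φ₂ on Ω \ U. Then φ₁(x) ≤ φ₂(x) for every x ∈ Ω. -/
open MeasureTheory

set_option linter.unusedSectionVars false

section Aux

variable {Ω Ωs : Type*} [MetricSpace Ω] [CompactSpace Ω] [Nonempty Ω]
    [MetricSpace Ωs] [CompactSpace Ωs]

lemma kp_bddAbove (c : Ω × Ωs → ℝ) (hc : Continuous c) (φ : C(Ω, ℝ)) (y : Ωs) :
    BddAbove (Set.range fun x : Ω => φ x - c (x, y)) := by
  have hcont : Continuous fun x : Ω => φ x - c (x, y) :=
    φ.continuous.sub (hc.comp (continuous_id.prodMk continuous_const))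
  rw [← Set.image_univ]
  exact isCompact_univ.bddAbove_image hcont.continuousOn

lemma kp_ctransform_continuous (c : Ω × Ωs → ℝ) (hc : Continuous c) (φ : C(Ω, ℝ)) :
    Continuous fun y : Ωs => ⨆ x : Ω, (φ x - c (x, y)) := by
  set g : C(Ω × Ωs, ℝ) := ⟨fun p => φ p.1 - c p, (φ.continuous.comp continuous_fst).sub hc⟩
    with hg
  rw [Metric.continuous_iff]
  intro y ε hε
  obtain ⟨δ, hδ, hmod⟩ := g.uniform_continuity (ε / 2) (by linarith)
  refine ⟨δ, hδ, fun y' hy' => ?_⟩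
  have key : ∀ a b : Ωs, dist a b < δ →
      (⨆ x : Ω, (φ x - c (x, a))) ≤ (⨆ x : Ω, (φ x - c (x, b))) + ε / 2 := by
    intro a b hab
    refine ciSup_le fun x => ?_
    have hd : dist ((x, a) : Ω × Ωs) (x, b) < δ := by
      have : dist ((x, a) : Ω × Ωs) (x, b) = dist a b := by
        simp [Prod.dist_eq, dist_nonneg]
      rwa [this]
    have hgval : dist (φ x - c (x, a)) (φ x - c (x, b)) < ε / 2 := hmod hd
    rw [Real.dist_eq] at hgval
    have h3 := (abs_lt.mp hgval).2
    have h4 : φ x - c (x, b) ≤ ⨆ x : Ω, (φ x - c (x, b)) :=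
      le_ciSup (kp_bddAbove c hc φ b) x
    linarith
  have h1 := key y' y hy'
  have h2 := key y y' (by rwa [dist_comm])
  rw [Real.dist_eq, abs_sub_lt_iff]
  constructor <;> linarith

lemma kp_integrable {X : Type*} [MetricSpace X] [CompactSpace X] [MeasurableSpace X]
    [BorelSpace X] (μ : Measure X) [IsFiniteMeasure μ] {f : X → ℝ} (hf : Continuous f) :
    Integrable f μ :=
  hf.integrable_of_hasCompactSupport (HasCompactSupport.of_compactSpace f)

end Aux

/-- Standard-form comparison principle for Kantorovich
potentials when at least one of them is unique up to an additive constant. -/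
theorem comparison_principle_kantorovich_potentials_unique
    {Ω Ωs : Type*} [MetricSpace Ω] [CompactSpace Ω] [Nonempty Ω]
    [MeasurableSpace Ω] [BorelSpace Ω]
    [MetricSpace Ωs] [CompactSpace Ωs] [MeasurableSpace Ωs] [BorelSpace Ωs]
    (c : Ω × Ωs → ℝ) (hc : Continuous c)
    (μ₁ μ₂ : Measure Ω) [IsProbabilityMeasure μ₁] [IsProbabilityMeasure μ₂]
    (ν : Measure Ωs) [IsProbabilityMeasure ν]
    (J : Measure Ω → C(Ω, ℝ) → ℝ)
    (hJ : ∀ (μ : Measure Ω) (φ : C(Ω, ℝ)),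
      J μ φ = ∫ y, (⨆ x : Ω, (φ x - c (x, y))) ∂ν - ∫ x, φ x ∂μ)
    (φ₁ φ₂ : C(Ω, ℝ))
    (h₁ : ∀ ψ : C(Ω, ℝ), J μ₁ φ₁ ≤ J μ₁ ψ)
    (h₂ : ∀ ψ : C(Ω, ℝ), J μ₂ φ₂ ≤ J μ₂ ψ)
    (huniq :
      (∀ ψ : C(Ω, ℝ), (∀ χ : C(Ω, ℝ), J μ₁ ψ ≤ J μ₁ χ) →
        ∃ C : ℝ, ψ = φ₁ + ContinuousMap.const Ω C) ∨
      (∀ ψ : C(Ω, ℝ), (∀ χ : C(Ω, ℝ), J μ₂ ψ ≤ J μ₂ χ) →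
        ∃ C : ℝ, ψ = φ₂ + ContinuousMap.const Ω C))
    (U : Set Ω) (hUne : U ≠ Set.univ) (hU : MeasurableSet U)
    (hμ : ∀ A : Set Ω, A ⊆ U → MeasurableSet A → μ₁ A ≤ μ₂ A)
    (hφ : ∀ x ∈ Uᶜ, φ₁ x ≤ φ₂ x) :
    ∀ x : Ω, φ₁ x ≤ φ₂ x := by
  -- integrability facts
  have intT : ∀ φ : C(Ω, ℝ), Integrable (fun y => ⨆ x : Ω, (φ x - c (x, y))) ν :=
    fun φ => kp_integrable ν (kp_ctransform_continuous c hc φ)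
  have intμ : ∀ (μ : Measure Ω) [IsFiniteMeasure μ] (φ : C(Ω, ℝ)),
      Integrable (fun x => φ x) μ := fun μ _ φ => kp_integrable μ φ.continuous
  -- pointwise inequalities on c-transforms
  have hTinf : ∀ y : Ωs, (⨆ x : Ω, ((φ₁ ⊓ φ₂) x - c (x, y))) ≤
      min (⨆ x : Ω, (φ₁ x - c (x, y))) (⨆ x : Ω, (φ₂ x - c (x, y))) := by
    intro y
    refine le_min (ciSup_le fun x => ?_) (ciSup_le fun x => ?_)
    · calc (φ₁ ⊓ φ₂) x - c (x, y) ≤ φ₁ x - c (x, y) := by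
            have : (φ₁ ⊓ φ₂) x ≤ φ₁ x := by
              simp [ContinuousMap.inf_apply]
            linarith
        _ ≤ _ := le_ciSup (kp_bddAbove c hc φ₁ y) x
    · calc (φ₁ ⊓ φ₂) x - c (x, y) ≤ φ₂ x - c (x, y) := by
            have : (φ₁ ⊓ φ₂) x ≤ φ₂ x := by
              simp [ContinuousMap.inf_apply]
            linarith
        _ ≤ _ := le_ciSup (kp_bddAbove c hc φ₂ y) x
  have hTsup : ∀ y : Ωs, (⨆ x : Ω, ((φ₁ ⊔ φ₂) x - c (x, y))) ≤
      max (⨆ x : Ω, (φ₁ x - c (x, y))) (⨆ x : Ω, (φ₂ x - c (x, y))) := by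
    intro y
    refine ciSup_le fun x => ?_
    rcases le_total (φ₁ x) (φ₂ x) with h | h
    · have hs : (φ₁ ⊔ φ₂) x = φ₂ x := by
        simp [ContinuousMap.sup_apply, max_eq_right h]
      rw [hs]
      exact le_trans (le_ciSup (kp_bddAbove c hc φ₂ y) x) (le_max_right _ _)
    · have hs : (φ₁ ⊔ φ₂) x = φ₁ x := by
        simp [ContinuousMap.sup_apply, max_eq_left h]
      rw [hs]
      exact le_trans (le_ciSup (kp_bddAbove c hc φ₁ y) x) (le_max_left _ _)
  -- the ν-side inequality
  have hν : (∫ y, (⨆ x : Ω, ((φ₁ ⊓ φ₂) x - c (x, y))) ∂ν) +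
      (∫ y, (⨆ x : Ω, ((φ₁ ⊔ φ₂) x - c (x, y))) ∂ν) ≤
      (∫ y, (⨆ x : Ω, (φ₁ x - c (x, y))) ∂ν) +
      (∫ y, (⨆ x : Ω, (φ₂ x - c (x, y))) ∂ν) := by
    rw [← integral_add (intT _) (intT _), ← integral_add (intT _) (intT _)]
    refine integral_mono ((intT _).add (intT _)) ((intT _).add (intT _)) fun y => ?_
    have h1 := hTinf y
    have h2 := hTsup y
    have h3 := min_add_max (⨆ x : Ω, (φ₁ x - c (x, y))) (⨆ x : Ω, (φ₂ x - c (x, y)))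
    simp only [Pi.add_apply]
    linarith
  -- the μ-side: comparison of ∫ g with g = φ₁ - φ₁ ⊓ φ₂
  set g : Ω → ℝ := fun x => φ₁ x - min (φ₁ x) (φ₂ x) with hgdef
  have hgcont : Continuous g := φ₁.continuous.sub (φ₁.continuous.min φ₂.continuous)
  have hg0 : ∀ x, 0 ≤ g x := fun x => by
    simp only [hgdef, sub_nonneg]; exact min_le_left _ _
  have hgU : ∀ x ∈ Uᶜ, g x = 0 := fun x hx => by
    simp only [hgdef]
    rw [min_eq_left (hφ x hx)]
    ring
  have hgint : ∀ (μ : Measure Ω) [IsFiniteMeasure μ], Integrable g μ :=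
    fun μ _ => kp_integrable μ hgcont
  have hres : μ₁.restrict U ≤ μ₂.restrict U := by
    refine Measure.le_iff.mpr fun s hs => ?_
    rw [Measure.restrict_apply hs, Measure.restrict_apply hs]
    exact hμ _ Set.inter_subset_right (hs.inter hU)
  have hzero : ∀ (μ : Measure Ω), (∫ x in Uᶜ, g x ∂μ) = 0 := by
    intro μ
    rw [setIntegral_congr_fun hU.compl (fun x hx => hgU x hx)]
    simp
  have hgle : (∫ x, g x ∂μ₁) ≤ ∫ x, g x ∂μ₂ := by
    calc (∫ x, g x ∂μ₁) = (∫ x in U, g x ∂μ₁) + ∫ x in Uᶜ, g x ∂μ₁ :=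
          (integral_add_compl hU (hgint μ₁)).symm
      _ = ∫ x in U, g x ∂μ₁ := by rw [hzero]; ring
      _ ≤ ∫ x in U, g x ∂μ₂ :=
          integral_mono_measure hres (Filter.Eventually.of_forall hg0) ((hgint μ₂).restrict)
      _ ≤ ∫ x, g x ∂μ₂ := setIntegral_le_integral (hgint μ₂) (Filter.Eventually.of_forall hg0)
  have hg1 : (∫ x, g x ∂μ₁) = (∫ x, φ₁ x ∂μ₁) - ∫ x, (φ₁ ⊓ φ₂) x ∂μ₁ := by
    rw [← integral_sub (intμ μ₁ φ₁) (intμ μ₁ (φ₁ ⊓ φ₂))]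
    refine integral_congr_ae (Filter.Eventually.of_forall fun x => ?_)
    simp [hgdef, ContinuousMap.inf_apply]
  have hg2 : (∫ x, g x ∂μ₂) = (∫ x, (φ₁ ⊔ φ₂) x ∂μ₂) - ∫ x, φ₂ x ∂μ₂ := by
    rw [← integral_sub (intμ μ₂ (φ₁ ⊔ φ₂)) (intμ μ₂ φ₂)]
    refine integral_congr_ae (Filter.Eventually.of_forall fun x => ?_)
    have h3 := min_add_max (φ₁ x) (φ₂ x)
    simp only [hgdef, ContinuousMap.sup_apply]
    linarith
  -- key inequality and equalities
  have hsum : J μ₁ (φ₁ ⊓ φ₂) + J μ₂ (φ₁ ⊔ φ₂) ≤ J μ₁ φ₁ + J μ₂ φ₂ := by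
    rw [hJ μ₁ (φ₁ ⊓ φ₂), hJ μ₂ (φ₁ ⊔ φ₂), hJ μ₁ φ₁, hJ μ₂ φ₂]
    rw [hg1, hg2] at hgle
    linarith
  have e₁ : J μ₁ (φ₁ ⊓ φ₂) = J μ₁ φ₁ :=
    le_antisymm (by linarith [h₂ (φ₁ ⊔ φ₂)]) (h₁ _)
  have e₂ : J μ₂ (φ₁ ⊔ φ₂) = J μ₂ φ₂ :=
    le_antisymm (by linarith [h₁ (φ₁ ⊓ φ₂)]) (h₂ _)
  obtain ⟨x₀, hx₀⟩ := (Set.ne_univ_iff_exists_notMem U).mp hUne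
  intro x
  rcases huniq with hu | hu
  · obtain ⟨C, hC⟩ := hu (φ₁ ⊓ φ₂) (fun χ => e₁.le.trans (h₁ χ))
    have hx0 := congrArg (fun ψ : C(Ω, ℝ) => ψ x₀) hC
    simp only [ContinuousMap.inf_apply, ContinuousMap.add_apply,
      ContinuousMap.const_apply] at hx0
    rw [min_eq_left (hφ x₀ hx₀)] at hx0
    have hC0 : C = 0 := by linarith
    have hx1 := congrArg (fun ψ : C(Ω, ℝ) => ψ x) hC
    simp only [ContinuousMap.inf_apply, ContinuousMap.add_apply,
      ContinuousMap.const_apply, hC0, add_zero] at hx1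
    exact min_eq_left_iff.mp hx1
  · obtain ⟨C, hC⟩ := hu (φ₁ ⊔ φ₂) (fun χ => e₂.le.trans (h₂ χ))
    have hx0 := congrArg (fun ψ : C(Ω, ℝ) => ψ x₀) hC
    simp only [ContinuousMap.sup_apply, ContinuousMap.add_apply,
      ContinuousMap.const_apply] at hx0
    rw [max_eq_right (hφ x₀ hx₀)] at hx0
    have hC0 : C = 0 := by linarith
    have hx1 := congrArg (fun ψ : C(Ω, ℝ) => ψ x) hC
    simp only [ContinuousMap.sup_apply, ContinuousMap.add_apply,
      ContinuousMap.const_apply, hC0, add_zero] at hx1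
    exact max_eq_right_iff.mp hx1
end

section
/- Let Ω, Ω* be compact metric spaces with Ω nonempty, let c : Ω × Ω* → ℝ be continuous, let ε > 0, let α be a nonzero finite positive Borel measure on Ω, and let ν be a Borel probability measure on Ω*. Define L_{c,ε}(φ)(y) = ε · log(∫_Ω exp((φ(x) − c(x, y))/ε) dα(x)) and J_ε(μ, φ) = ∫_{Ω*} L_{c,ε}(φ) dν − ∫_Ω φ dμ. Let μ₁, μ₂ be Borel probability measures on Ω and for i = 1, 2 let φᵢ ∈ C(Ω, ℝ) be a global minimizer of J_ε(μᵢ, ·) over C(Ω, ℝ). Let U ⊆ Ω be a Borel set with μ₁(A) ≤ μ₂(A) for every Borel A ⊆ U and φ₁ ≤ φ₂ on Ω \ U. Then the pointwise minimum φ₁ ⊓ φ₂ is a global minimizer of J_ε(μ₁, ·), the pointwise maximum φ₁ ⊔ φ₂ is a global minimizer of J_ε(μ₂, ·), and ∫_Ω (φ₁ − φ₂)⁺ d|μ₂ − μ₁| = 0, where |μ₂ − μ₁| is the total variation measure of the signed measure μ₂ − μ₁ (hence φ₁ ≤ φ₂ on the support of μ₂ − μ₁). -/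
open MeasureTheory

private lemma contIntegrable' {X : Type*} [TopologicalSpace X] [CompactSpace X] [T2Space X]
    [MeasurableSpace X] [OpensMeasurableSpace X] (μ : Measure X) [IsFiniteMeasure μ]
    {f : X → ℝ} (hf : Continuous f) : Integrable f μ := by
  have h := hf.continuousOn.integrableOn_compact (μ := μ) isCompact_univ
  rwa [integrableOn_univ] at h

private lemma tvKey' {Ω : Type*} [MeasurableSpace Ω]
    (μ₁ μ₂ : Measure Ω) [IsFiniteMeasure μ₁] [IsFiniteMeasure μ₂]
    (U : Set Ω)
    (hμ : ∀ A : Set Ω, A ⊆ U → MeasurableSet A → μ₁ A ≤ μ₂ A) :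
    ∀ A : Set Ω, MeasurableSet A → A ⊆ U →
      (μ₂.toSignedMeasure - μ₁.toSignedMeasure).totalVariation A + μ₁ A = μ₂ A := by
  set σ := μ₂.toSignedMeasure - μ₁.toSignedMeasure with hσdef
  obtain ⟨i, hi₁, hi₂, hi₃, hpos, hneg⟩ := σ.toJordanDecomposition_spec
  intro A hA hAU
  have hσval : ∀ B : Set Ω, MeasurableSet B → σ B = (μ₂ B).toReal - (μ₁ B).toReal :=
    fun B hB => Measure.toSignedMeasure_sub_apply hB
  have hσnn : ∀ B : Set Ω, MeasurableSet B → B ⊆ U → 0 ≤ σ B := by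
    intro B hB hBU
    rw [hσval B hB]
    have h1 : (μ₁ B).toReal ≤ (μ₂ B).toReal :=
      ENNReal.toReal_mono (measure_ne_top _ _) (hμ B hBU hB)
    linarith
  have h0 : σ (iᶜ ∩ A) = 0 := by
    have hle : σ (iᶜ ∩ A) ≤ (0 : VectorMeasure Ω ℝ) (iᶜ ∩ A) :=
      VectorMeasure.subset_le_of_restrict_le_restrict σ 0 hi₁.compl hi₃ Set.inter_subset_left
    rw [VectorMeasure.zero_apply] at hle
    have hge := hσnn (iᶜ ∩ A) (hi₁.compl.inter hA) (Set.inter_subset_right.trans hAU)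
    linarith
  have hnegA : σ.toJordanDecomposition.negPart A = 0 := by
    rw [hneg, SignedMeasure.toMeasureOfLEZero_apply _ hi₃ hi₁.compl hA]
    simp [h0]
  have hsplit : σ A = σ (i ∩ A) + σ (iᶜ ∩ A) := by
    rw [← VectorMeasure.of_union
      (disjoint_compl_right.mono Set.inter_subset_left Set.inter_subset_left)
      (hi₁.inter hA) (hi₁.compl.inter hA)]
    congr 1
    rw [← Set.union_inter_distrib_right, Set.union_compl_self, Set.univ_inter]
  have hiA : σ (i ∩ A) = σ A := by rw [hsplit, h0, add_zero]
  have hposA : σ.toJordanDecomposition.posPart A = ENNReal.ofReal (σ A) := by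
    rw [hpos, SignedMeasure.toMeasureOfZeroLE_apply _ hi₂ hi₁ hA,
      ENNReal.ofReal_eq_coe_nnreal (hσnn A hA hAU)]
    exact ENNReal.coe_inj.mpr (Subtype.ext hiA)
  have htv : σ.totalVariation A = ENNReal.ofReal (σ A) := by
    rw [SignedMeasure.totalVariation, Measure.add_apply, hnegA, hposA, add_zero]
  rw [htv, hσval A hA, ENNReal.ofReal_sub _ ENNReal.toReal_nonneg,
    ENNReal.ofReal_toReal (measure_ne_top _ _), ENNReal.ofReal_toReal (measure_ne_top _ _),
    tsub_add_cancel_of_le (hμ A hAU hA)]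

/-- Comparison principle for entropic dual potentials, i.e.
global minimizers of `φ ↦ ∫ L_{c,ε}(φ) dν − ∫ φ dμ` with the soft
c-transform `L_{c,ε}(φ)(y) = ε log (∫ exp ((φ x − c (x, y)) / ε) dα x)`. -/
theorem comparison_principle_entropic_potentials
    {Ω Ωs : Type*} [MetricSpace Ω] [CompactSpace Ω] [Nonempty Ω]
    [MeasurableSpace Ω] [BorelSpace Ω]
    [MetricSpace Ωs] [CompactSpace Ωs] [MeasurableSpace Ωs] [BorelSpace Ωs]
    (c : Ω × Ωs → ℝ) (hc : Continuous c)
    (ε : ℝ) (hε : 0 < ε)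
    (α : Measure Ω) [IsFiniteMeasure α] (hα : α ≠ 0)
    (μ₁ μ₂ : Measure Ω) [IsProbabilityMeasure μ₁] [IsProbabilityMeasure μ₂]
    (ν : Measure Ωs) [IsProbabilityMeasure ν]
    (J : Measure Ω → C(Ω, ℝ) → ℝ)
    (hJ : ∀ (μ : Measure Ω) (φ : C(Ω, ℝ)),
      J μ φ = ∫ y, ε * Real.log (∫ x, Real.exp ((φ x - c (x, y)) / ε) ∂α) ∂ν -
        ∫ x, φ x ∂μ)
    (φ₁ φ₂ : C(Ω, ℝ))
    (h₁ : ∀ ψ : C(Ω, ℝ), J μ₁ φ₁ ≤ J μ₁ ψ)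
    (h₂ : ∀ ψ : C(Ω, ℝ), J μ₂ φ₂ ≤ J μ₂ ψ)
    (U : Set Ω) (hU : MeasurableSet U)
    (hμ : ∀ A : Set Ω, A ⊆ U → MeasurableSet A → μ₁ A ≤ μ₂ A)
    (hφ : ∀ x ∈ Uᶜ, φ₁ x ≤ φ₂ x) :
    (∀ ψ : C(Ω, ℝ), J μ₁ (φ₁ ⊓ φ₂) ≤ J μ₁ ψ) ∧
      (∀ ψ : C(Ω, ℝ), J μ₂ (φ₁ ⊔ φ₂) ≤ J μ₂ ψ) ∧
      ∫⁻ x, ENNReal.ofReal (φ₁ x - φ₂ x)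
        ∂(μ₂.toSignedMeasure - μ₁.toSignedMeasure).totalVariation = 0 := by
  -- the positive part g of φ₁ - φ₂
  set g : Ω → ℝ := fun x => max (φ₁ x - φ₂ x) 0 with hgdef
  have hgc : Continuous g := (((map_continuous φ₁).sub (map_continuous φ₂)).max continuous_const)
  have hg0 : ∀ x, 0 ≤ g x := fun x => le_max_right _ _
  have hgU : ∀ x ∉ U, g x = 0 := fun x hx => max_eq_right (sub_nonpos.mpr (hφ x hx))
  -- the soft transform integrand
  set I : C(Ω, ℝ) → Ωs → ℝ := fun φ y => ∫ x, Real.exp ((φ x - c (x, y)) / ε) ∂α with hIdef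
  have hexpc : ∀ (φ : C(Ω, ℝ)) (y : Ωs),
      Continuous fun x => Real.exp ((φ x - c (x, y)) / ε) := fun φ y =>
    Real.continuous_exp.comp (((map_continuous φ).sub
      (hc.comp (continuous_id.prodMk continuous_const))).div_const ε)
  have hIint : ∀ (φ : C(Ω, ℝ)) (y : Ωs),
      Integrable (fun x => Real.exp ((φ x - c (x, y)) / ε)) α :=
    fun φ y => contIntegrable' α (hexpc φ y)
  have hIpos : ∀ (φ : C(Ω, ℝ)) (y : Ωs), 0 < I φ y := by
    intro φ y
    refine (integral_pos_iff_support_of_nonneg (fun x => (Real.exp_pos _).le) (hIint φ y)).mpr ?_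
    have hsupp : Function.support (fun x => Real.exp ((φ x - c (x, y)) / ε)) = Set.univ :=
      Set.eq_univ_of_forall fun x => (Real.exp_pos _).ne'
    rw [hsupp]
    exact pos_iff_ne_zero.mpr (Measure.measure_univ_ne_zero.mpr hα)
  have hImono : ∀ φ ψ : C(Ω, ℝ), (∀ x, φ x ≤ ψ x) → ∀ y, I φ y ≤ I ψ y := by
    intro φ ψ h y
    refine integral_mono (hIint φ y) (hIint ψ y) fun x => ?_
    have := h x
    gcongr
  have hIsum : ∀ y, I (φ₁ ⊓ φ₂) y + I (φ₁ ⊔ φ₂) y = I φ₁ y + I φ₂ y := by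
    intro y
    rw [hIdef]
    rw [← integral_add (hIint (φ₁ ⊓ φ₂) y) (hIint (φ₁ ⊔ φ₂) y),
      ← integral_add (hIint φ₁ y) (hIint φ₂ y)]
    refine integral_congr_ae (Filter.Eventually.of_forall fun x => ?_)
    simp only [ContinuousMap.inf_apply, ContinuousMap.sup_apply]
    rcases le_total (φ₁ x) (φ₂ x) with h | h
    · rw [inf_eq_left.2 h, sup_eq_right.2 h]
    · rw [inf_eq_right.2 h, sup_eq_left.2 h, add_comm]
  -- pointwise log-inequality
  have hlog : ∀ y, ε * Real.log (I (φ₁ ⊓ φ₂) y) + ε * Real.log (I (φ₁ ⊔ φ₂) y)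
      ≤ ε * Real.log (I φ₁ y) + ε * Real.log (I φ₂ y) := by
    intro y
    have ha := hIpos (φ₁ ⊓ φ₂) y
    have hb := hIpos (φ₁ ⊔ φ₂) y
    have hp := hIpos φ₁ y
    have hq := hIpos φ₂ y
    have h1 : I (φ₁ ⊓ φ₂) y ≤ I φ₁ y :=
      hImono _ _ (fun x => by simp [ContinuousMap.inf_apply, inf_le_left]) y
    have h2 : I (φ₁ ⊓ φ₂) y ≤ I φ₂ y :=
      hImono _ _ (fun x => by simp [ContinuousMap.inf_apply, inf_le_right]) y
    have hprod : I (φ₁ ⊓ φ₂) y * I (φ₁ ⊔ φ₂) y ≤ I φ₁ y * I φ₂ y := by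
      nlinarith [hIsum y, mul_nonneg (sub_nonneg.2 h1) (sub_nonneg.2 h2)]
    rw [← mul_add, ← mul_add, ← Real.log_mul ha.ne' hb.ne', ← Real.log_mul hp.ne' hq.ne']
    exact mul_le_mul_of_nonneg_left
      ((Real.log_le_log_iff (mul_pos ha hb) (mul_pos hp hq)).mpr hprod) hε.le
  -- continuity and integrability of the dual functional integrand
  have hIcont : ∀ φ : C(Ω, ℝ), Continuous fun y => I φ y := by
    intro φ
    obtain ⟨Cφ, hCφ⟩ := (isCompact_range (map_continuous φ)).isBounded.exists_norm_le
    obtain ⟨Cc, hCc⟩ := (isCompact_range hc).isBounded.exists_norm_le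
    refine continuous_of_dominated (fun y => (hexpc φ y).aestronglyMeasurable)
      (bound := fun _ => Real.exp ((Cφ + Cc) / ε)) (fun y =>
        Filter.Eventually.of_forall fun x => ?_) (integrable_const _)
      (Filter.Eventually.of_forall fun x =>
        Real.continuous_exp.comp (((continuous_const.sub
          (hc.comp (continuous_const.prodMk continuous_id))).div_const ε)))
    rw [Real.norm_eq_abs, Real.abs_exp]
    refine Real.exp_le_exp.2 (div_le_div_of_nonneg_right ?_ hε.le)
    have h1 : ‖φ x‖ ≤ Cφ := hCφ _ ⟨x, rfl⟩
    have h2 : ‖c (x, y)‖ ≤ Cc := hCc _ ⟨(x, y), rfl⟩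
    rw [Real.norm_eq_abs] at h1 h2
    have := abs_le.1 h1
    have := abs_le.1 h2
    linarith [(abs_le.1 h1).2, (abs_le.1 h2).1]
  have hLcont : ∀ φ : C(Ω, ℝ), Continuous fun y => ε * Real.log (I φ y) := fun φ =>
    continuous_const.mul ((hIcont φ).log fun y => (hIpos φ y).ne')
  have hLint : ∀ φ : C(Ω, ℝ), Integrable (fun y => ε * Real.log (I φ y)) ν := fun φ =>
    contIntegrable' ν (hLcont φ)
  -- integrated log inequality
  have hKey : (∫ y, ε * Real.log (I (φ₁ ⊓ φ₂) y) ∂ν) + ∫ y, ε * Real.log (I (φ₁ ⊔ φ₂) y) ∂ν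
      ≤ (∫ y, ε * Real.log (I φ₁ y) ∂ν) + ∫ y, ε * Real.log (I φ₂ y) ∂ν := by
    rw [← integral_add (hLint (φ₁ ⊓ φ₂)) (hLint (φ₁ ⊔ φ₂)), ← integral_add (hLint φ₁) (hLint φ₂)]
    exact integral_mono ((hLint (φ₁ ⊓ φ₂)).add (hLint (φ₁ ⊔ φ₂)))
      ((hLint φ₁).add (hLint φ₂)) hlog
  -- linear part
  have hmint : ∀ (μ : Measure Ω) [IsFiniteMeasure μ] (φ : C(Ω, ℝ)),
      Integrable (fun x => φ x) μ := fun μ _ φ => contIntegrable' μ (map_continuous φ)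
  have hgint : ∀ (μ : Measure Ω) [IsFiniteMeasure μ], Integrable g μ := fun μ _ =>
    contIntegrable' μ hgc
  have hmeq : ∫ x, (φ₁ ⊓ φ₂) x ∂μ₁ = ∫ x, φ₁ x ∂μ₁ - ∫ x, g x ∂μ₁ := by
    rw [← integral_sub (hmint μ₁ φ₁) (hgint μ₁)]
    refine integral_congr_ae (Filter.Eventually.of_forall fun x => ?_)
    simp only [ContinuousMap.inf_apply, hgdef]
    rcases le_total (φ₁ x) (φ₂ x) with h | h
    · rw [inf_eq_left.2 h, max_eq_right (sub_nonpos.2 h)]; ring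
    · rw [inf_eq_right.2 h, max_eq_left (sub_nonneg.2 h)]; ring
  have hMeq : ∫ x, (φ₁ ⊔ φ₂) x ∂μ₂ = ∫ x, φ₂ x ∂μ₂ + ∫ x, g x ∂μ₂ := by
    rw [← integral_add (hmint μ₂ φ₂) (hgint μ₂)]
    refine integral_congr_ae (Filter.Eventually.of_forall fun x => ?_)
    simp only [ContinuousMap.sup_apply, hgdef]
    rcases le_total (φ₁ x) (φ₂ x) with h | h
    · rw [sup_eq_right.2 h, max_eq_right (sub_nonpos.2 h)]; ring
    · rw [sup_eq_left.2 h, max_eq_left (sub_nonneg.2 h)]; ring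
  -- monotonicity of ∫ g
  have hFind : (fun x => ENNReal.ofReal (g x)) = U.indicator fun x => ENNReal.ofReal (g x) := by
    funext x
    by_cases hx : x ∈ U
    · rw [Set.indicator_of_mem hx]
    · rw [Set.indicator_of_notMem hx, hgU x hx, ENNReal.ofReal_zero]
  have hres : μ₁.restrict U ≤ μ₂.restrict U := by
    rw [Measure.le_iff]
    intro s hs
    rw [Measure.restrict_apply hs, Measure.restrict_apply hs]
    exact hμ _ Set.inter_subset_right (hs.inter hU)
  have hlin : ∀ (μ : Measure Ω) [IsFiniteMeasure μ],
      ∫⁻ x, ENNReal.ofReal (g x) ∂μ = ∫⁻ x in U, ENNReal.ofReal (g x) ∂μ := by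
    intro μ _
    conv_lhs => rw [hFind]
    rw [lintegral_indicator hU]
  have hlig : ∀ (μ : Measure Ω) [IsFiniteMeasure μ],
      ENNReal.ofReal (∫ x, g x ∂μ) = ∫⁻ x, ENNReal.ofReal (g x) ∂μ := fun μ _ =>
    ofReal_integral_eq_lintegral_ofReal (hgint μ) (Filter.Eventually.of_forall hg0)
  have hD : ∫ x, g x ∂μ₁ ≤ ∫ x, g x ∂μ₂ := by
    rw [← ENNReal.ofReal_le_ofReal_iff (integral_nonneg hg0), hlig μ₁, hlig μ₂,
      hlin μ₁, hlin μ₂]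
    exact lintegral_mono' hres le_rfl
  -- combine
  have hJ₁m := hJ μ₁ (φ₁ ⊓ φ₂)
  have hJ₂M := hJ μ₂ (φ₁ ⊔ φ₂)
  have hJ₁ := hJ μ₁ φ₁
  have hJ₂ := hJ μ₂ φ₂
  have hopt₁ := h₁ (φ₁ ⊓ φ₂)
  have hopt₂ := h₂ (φ₁ ⊔ φ₂)
  have heq₁ : J μ₁ (φ₁ ⊓ φ₂) = J μ₁ φ₁ := by
    rw [hJ₁m, hmeq] at *
    linarith
  have heq₂ : J μ₂ (φ₁ ⊔ φ₂) = J μ₂ φ₂ := by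
    rw [hJ₂M, hMeq] at *
    linarith
  have hgeq : ∫ x, g x ∂μ₁ = ∫ x, g x ∂μ₂ := by
    rw [hJ₁m, hmeq] at hopt₁
    rw [hJ₂M, hMeq] at hopt₂
    rw [hJ₁] at hopt₁
    rw [hJ₂] at hopt₂
    linarith
  refine ⟨fun ψ => heq₁ ▸ h₁ ψ, fun ψ => heq₂ ▸ h₂ ψ, ?_⟩
  -- the total variation statement
  have hofReal : (fun x => ENNReal.ofReal (φ₁ x - φ₂ x)) = fun x => ENNReal.ofReal (g x) := by
    funext x
    rcases le_total (φ₁ x - φ₂ x) 0 with h | h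
    · rw [hgdef]; simp only []
      rw [max_eq_right h, ENNReal.ofReal_zero, ENNReal.ofReal_eq_zero.2 h]
    · rw [hgdef]; simp only []
      rw [max_eq_left h]
  rw [hofReal]
  -- lintegrals w.r.t. μ₁ and μ₂ agree and are finite
  have hglig : ∫⁻ x, ENNReal.ofReal (g x) ∂μ₁ = ∫⁻ x, ENNReal.ofReal (g x) ∂μ₂ := by
    rw [← hlig μ₁, ← hlig μ₂, hgeq]
  have hfin : ∫⁻ x, ENNReal.ofReal (g x) ∂μ₂ ≠ ⊤ := by
    rw [← hlig μ₂]
    exact ENNReal.ofReal_ne_top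
  -- measure identity on U
  set τ := (μ₂.toSignedMeasure - μ₁.toSignedMeasure).totalVariation with hτdef
  have hrest : τ.restrict U + μ₁.restrict U = μ₂.restrict U := by
    ext A hA
    rw [Measure.add_apply, Measure.restrict_apply hA, Measure.restrict_apply hA,
      Measure.restrict_apply hA]
    exact tvKey' μ₁ μ₂ U hμ (A ∩ U) (hA.inter hU) Set.inter_subset_right
  have hτlin : ∫⁻ x, ENNReal.ofReal (g x) ∂τ = ∫⁻ x in U, ENNReal.ofReal (g x) ∂τ := by
    conv_lhs => rw [hFind]
    rw [lintegral_indicator hU]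
  have hsum : (∫⁻ x, ENNReal.ofReal (g x) ∂τ) + ∫⁻ x, ENNReal.ofReal (g x) ∂μ₁
      = ∫⁻ x, ENNReal.ofReal (g x) ∂μ₂ := by
    rw [hτlin, hlin μ₁, hlin μ₂, ← lintegral_add_measure, hrest]
  rw [hglig] at hsum
  have hsum' : (∫⁻ x, ENNReal.ofReal (g x) ∂τ) + ∫⁻ x, ENNReal.ofReal (g x) ∂μ₂
      = 0 + ∫⁻ x, ENNReal.ofReal (g x) ∂μ₂ := by rw [zero_add]; exact hsum
  exact (ENNReal.add_left_inj hfin).mp hsum'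
end

section
/- Let Ω, Ω* be compact metric spaces with Ω nonempty, let c : Ω × Ω* → ℝ be continuous, and let g₀, g₁ : ℝ → ℝ be nondecreasing continuous functions (for example the convex conjugates h₀*, h₁* of finite-valued entropy functions). For finite positive Borel measures μ on Ω and ν on Ω*, define J_h(μ, φ) = ∫_{Ω*} g₁(φ^c(y)) dν(y) + ∫_Ω g₀(−φ(x)) dμ(x) for φ ∈ C(Ω, ℝ), where φ^c(y) = sup_{x ∈ Ω} (φ(x) − c(x, y)). Let μ₁, μ₂ be finite positive Borel measures on Ω, ν a finite positive Borel measure on Ω*, and for i = 1, 2 let φᵢ ∈ C(Ω, ℝ) be a global minimizer of J_h(μᵢ, ·) over C(Ω, ℝ). Let U ⊆ Ω be a Borel set with μ₁(A) ≤ μ₂(A) for every Borel A ⊆ U and φ₁ ≤ φ₂ on Ω \ U. Then φ₁ ⊓ φ₂ is a global minimizer of J_h(μ₁, ·), φ₁ ⊔ φ₂ is a global minimizer of J_h(μ₂, ·), and ∫_Ω (g₀(−φ₂(x)) − g₀(−φ₁(x)))⁺ d|μ₂ − μ₁|(x) = 0, i.e. −g₀(−φ₁(x)) ≤ −g₀(−φ₂(x))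 for x in the support of μ₂ − μ₁. -/
open MeasureTheory

lemma tv_aux' {α : Type*} [MeasurableSpace α] (μ₁ μ₂ : Measure α)
    [IsFiniteMeasure μ₁] [IsFiniteMeasure μ₂] {U : Set α}
    (hμ : ∀ A : Set α, A ⊆ U → MeasurableSet A → μ₁ A ≤ μ₂ A)
    {A : Set α} (hA : MeasurableSet A) (hAU : A ⊆ U) :
    (μ₂.toSignedMeasure - μ₁.toSignedMeasure).totalVariation A + μ₁ A = μ₂ A := by
  set σ : SignedMeasure α := μ₂.toSignedMeasure - μ₁.toSignedMeasure with hσdef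
  obtain ⟨i, hi₁, hi₂, hi₃, hpos, hneg⟩ := σ.toJordanDecomposition_spec
  have hmeasiA : MeasurableSet (i ∩ A) := hi₁.inter hA
  have hmeasicA : MeasurableSet (iᶜ ∩ A) := hi₁.compl.inter hA
  have hσval : ∀ B : Set α, MeasurableSet B → σ B = (μ₂ B).toReal - (μ₁ B).toReal := by
    intro B hB
    rw [hσdef]
    exact Measure.toSignedMeasure_sub_apply hB
  have hneg0 : σ (iᶜ ∩ A) = 0 := by
    apply le_antisymm
    · have := VectorMeasure.subset_le_of_restrict_le_restrict σ 0 hi₁.compl hi₃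
        (Set.inter_subset_left (t := A))
      simpa using this
    · rw [hσval _ hmeasicA]
      have hle : μ₁ (iᶜ ∩ A) ≤ μ₂ (iᶜ ∩ A) :=
        hμ _ (Set.inter_subset_right.trans hAU) hmeasicA
      have := ENNReal.toReal_mono (measure_ne_top μ₂ _) hle
      linarith
  have hAsplit : σ A = σ (i ∩ A) := by
    have hdisj : Disjoint (i ∩ A) (iᶜ ∩ A) :=
      (disjoint_compl_right.inf_left A).inf_right A |>.mono
        (by exact Set.inter_subset_inter_left _ (le_refl i)) (le_refl _)
    have hdisj' : Disjoint (i ∩ A) (iᶜ ∩ A) := by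
      exact Disjoint.mono (Set.inter_subset_left) (Set.inter_subset_left) disjoint_compl_right
    have hu : (i ∩ A) ∪ (iᶜ ∩ A) = A := by
      rw [← Set.union_inter_distrib_right, Set.union_compl_self, Set.univ_inter]
    have := VectorMeasure.of_union hdisj' hmeasiA hmeasicA (v := σ)
    rw [hu] at this
    rw [this, hneg0, add_zero]
  have hTVA : σ.totalVariation A = ENNReal.ofReal (σ A) := by
    rw [SignedMeasure.totalVariation, Measure.add_apply, hpos, hneg,
      SignedMeasure.toMeasureOfZeroLE_apply σ hi₂ hi₁ hA,
      SignedMeasure.toMeasureOfLEZero_apply σ hi₃ hi₁.compl hA]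
    rw [← ENNReal.ofReal_eq_coe_nnreal, ← ENNReal.ofReal_eq_coe_nnreal, hneg0, neg_zero,
      ENNReal.ofReal_zero, add_zero, hAsplit]
  rw [hTVA, hσval _ hA]
  have h12 : μ₁ A ≤ μ₂ A := hμ A hAU hA
  have h1t : (μ₁ A).toReal ≤ (μ₂ A).toReal := ENNReal.toReal_mono (measure_ne_top _ _) h12
  have hrhs : μ₂ A = ENNReal.ofReal ((μ₂ A).toReal - (μ₁ A).toReal) + ENNReal.ofReal (μ₁ A).toReal := by
    rw [← ENNReal.ofReal_add (sub_nonneg.2 h1t) ENNReal.toReal_nonneg, sub_add_cancel,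
      ENNReal.ofReal_toReal (measure_ne_top _ _)]
  conv_rhs => rw [hrhs]
  rw [ENNReal.ofReal_toReal (measure_ne_top μ₁ A)]

lemma cont_integrable' {α : Type*} [TopologicalSpace α] [CompactSpace α] [MeasurableSpace α]
    [OpensMeasurableSpace α] [T2Space α] (μ : Measure α) [IsFiniteMeasure μ] {f : α → ℝ}
    (hf : Continuous f) : Integrable f μ :=
  hf.integrable_of_hasCompactSupport (HasCompactSupport.of_compactSpace f)

/-- Comparison principle for unbalanced dual potentials, i.e.
global minimizers of `φ ↦ ∫ g₁(φ^c) dν + ∫ g₀(−φ) dμ` with nondecreasing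
continuous `g₀, g₁` (e.g. the conjugates of finite entropy functions). -/
theorem comparison_principle_unbalanced_potentials
    {Ω Ωs : Type*} [MetricSpace Ω] [CompactSpace Ω] [Nonempty Ω]
    [MeasurableSpace Ω] [BorelSpace Ω]
    [MetricSpace Ωs] [CompactSpace Ωs] [MeasurableSpace Ωs] [BorelSpace Ωs]
    (c : Ω × Ωs → ℝ) (hc : Continuous c)
    (g₀ g₁ : ℝ → ℝ) (hg₀mono : Monotone g₀) (hg₁mono : Monotone g₁)
    (hg₀cont : Continuous g₀) (hg₁cont : Continuous g₁)
    (μ₁ μ₂ : Measure Ω) [IsFiniteMeasure μ₁] [IsFiniteMeasure μ₂]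
    (ν : Measure Ωs) [IsFiniteMeasure ν]
    (J : Measure Ω → C(Ω, ℝ) → ℝ)
    (hJ : ∀ (μ : Measure Ω) (φ : C(Ω, ℝ)),
      J μ φ = ∫ y, g₁ (⨆ x : Ω, (φ x - c (x, y))) ∂ν + ∫ x, g₀ (-φ x) ∂μ)
    (φ₁ φ₂ : C(Ω, ℝ))
    (h₁ : ∀ ψ : C(Ω, ℝ), J μ₁ φ₁ ≤ J μ₁ ψ)
    (h₂ : ∀ ψ : C(Ω, ℝ), J μ₂ φ₂ ≤ J μ₂ ψ)
    (U : Set Ω) (hU : MeasurableSet U)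
    (hμ : ∀ A : Set Ω, A ⊆ U → MeasurableSet A → μ₁ A ≤ μ₂ A)
    (hφ : ∀ x ∈ Uᶜ, φ₁ x ≤ φ₂ x) :
    (∀ ψ : C(Ω, ℝ), J μ₁ (φ₁ ⊓ φ₂) ≤ J μ₁ ψ) ∧
      (∀ ψ : C(Ω, ℝ), J μ₂ (φ₁ ⊔ φ₂) ≤ J μ₂ ψ) ∧
      ∫⁻ x, ENNReal.ofReal (g₀ (-φ₂ x) - g₀ (-φ₁ x))
        ∂(μ₂.toSignedMeasure - μ₁.toSignedMeasure).totalVariation = 0 := by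
  classical
  -- boundedness of c
  obtain ⟨Cc, hCc⟩ : ∃ C : ℝ, ∀ p : Ω × Ωs, ‖c p‖ ≤ C := by
    obtain ⟨C, hC⟩ := isCompact_univ.exists_bound_of_continuousOn hc.continuousOn
    exact ⟨C, fun p => hC p trivial⟩
  -- the c-transform
  set Φ : C(Ω, ℝ) → Ωs → ℝ := fun ψ y => ⨆ x : Ω, (ψ x - c (x, y)) with hΦdef
  have hbdd : ∀ (ψ : C(Ω, ℝ)) (y : Ωs), BddAbove (Set.range fun x : Ω => ψ x - c (x, y)) := by
    intro ψ y
    refine ⟨‖ψ‖ + Cc, ?_⟩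
    rintro t ⟨x, rfl⟩
    have h1 : ψ x ≤ ‖ψ‖ := le_trans (le_abs_self _) (ψ.norm_coe_le_norm x)
    have h2 : -Cc ≤ c (x, y) := neg_le_of_abs_le (hCc (x, y))
    simp only []
    linarith
  have hΦ_ub : ∀ (ψ : C(Ω, ℝ)) (y : Ωs), Φ ψ y ≤ ‖ψ‖ + Cc := by
    intro ψ y
    refine ciSup_le fun x => ?_
    have h1 : ψ x ≤ ‖ψ‖ := le_trans (le_abs_self _) (ψ.norm_coe_le_norm x)
    have h2 : -Cc ≤ c (x, y) := neg_le_of_abs_le (hCc (x, y))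
    linarith
  have hΦ_lb : ∀ (ψ : C(Ω, ℝ)) (y : Ωs), -(‖ψ‖ + Cc) ≤ Φ ψ y := by
    intro ψ y
    obtain ⟨x⟩ := (inferInstance : Nonempty Ω)
    refine le_trans ?_ (le_ciSup (hbdd ψ y) x)
    have h1 : -‖ψ‖ ≤ ψ x := neg_le_of_abs_le (ψ.norm_coe_le_norm x)
    have h2 : c (x, y) ≤ Cc := le_of_abs_le (hCc (x, y))
    linarith
  have hΦmeas : ∀ ψ : C(Ω, ℝ), Measurable (Φ ψ) := by
    intro ψ
    refine (lowerSemicontinuous_ciSup (fun y => hbdd ψ y) fun x => ?_).measurable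
    exact (continuous_const.sub (hc.comp (Continuous.prodMk_right x))).lowerSemicontinuous
  have hint1 : ∀ ψ : C(Ω, ℝ), Integrable (fun y => g₁ (Φ ψ y)) ν := by
    intro ψ
    have hmeas : Measurable fun y => g₁ (Φ ψ y) := hg₁cont.measurable.comp (hΦmeas ψ)
    refine (integrable_const (max |g₁ (‖ψ‖ + Cc)| |g₁ (-(‖ψ‖ + Cc))|)).mono'
      hmeas.aestronglyMeasurable (Filter.Eventually.of_forall fun y => ?_)
    have hu : g₁ (Φ ψ y) ≤ g₁ (‖ψ‖ + Cc) := hg₁mono (hΦ_ub ψ y)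
    have hl : g₁ (-(‖ψ‖ + Cc)) ≤ g₁ (Φ ψ y) := hg₁mono (hΦ_lb ψ y)
    rw [Real.norm_eq_abs, abs_le]
    constructor
    · have := neg_abs_le (g₁ (-(‖ψ‖ + Cc)))
      have := le_max_right |g₁ (‖ψ‖ + Cc)| |g₁ (-(‖ψ‖ + Cc))|
      linarith
    · have := le_abs_self (g₁ (‖ψ‖ + Cc))
      have := le_max_left |g₁ (‖ψ‖ + Cc)| |g₁ (-(‖ψ‖ + Cc))|
      linarith
  -- monotonicity of Φ and sup/inf identities
  have hΦmono : ∀ (ψ χ : C(Ω, ℝ)), (∀ x, ψ x ≤ χ x) → ∀ y, Φ ψ y ≤ Φ χ y := by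
    intro ψ χ h y
    exact ciSup_le fun x => le_trans (sub_le_sub_right (h x) _) (le_ciSup (hbdd χ y) x)
  have hmaxΦ : ∀ y : Ωs, Φ (φ₁ ⊔ φ₂) y = max (Φ φ₁ y) (Φ φ₂ y) := by
    intro y
    apply le_antisymm
    · refine ciSup_le fun x => ?_
      have hx : (φ₁ ⊔ φ₂) x = max (φ₁ x) (φ₂ x) := rfl
      rcases le_total (φ₁ x) (φ₂ x) with h | h
      · rw [hx, max_eq_right h]
        exact le_trans (le_ciSup (hbdd φ₂ y) x) (le_max_right _ _)
      · rw [hx, max_eq_left h]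
        exact le_trans (le_ciSup (hbdd φ₁ y) x) (le_max_left _ _)
    · exact max_le (hΦmono φ₁ _ (fun x => le_max_left _ _) y)
        (hΦmono φ₂ _ (fun x => le_max_right _ _) y)
  have hminΦ : ∀ y : Ωs, Φ (φ₁ ⊓ φ₂) y ≤ min (Φ φ₁ y) (Φ φ₂ y) := by
    intro y
    exact le_min (hΦmono _ φ₁ (fun x => min_le_left _ _) y)
      (hΦmono _ φ₂ (fun x => min_le_right _ _) y)
  -- pointwise inequality on the ν side
  have hkey1 : ∀ y, g₁ (Φ (φ₁ ⊓ φ₂) y) + g₁ (Φ (φ₁ ⊔ φ₂) y)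
      ≤ g₁ (Φ φ₁ y) + g₁ (Φ φ₂ y) := by
    intro y
    have h1 : g₁ (Φ (φ₁ ⊓ φ₂) y) ≤ min (g₁ (Φ φ₁ y)) (g₁ (Φ φ₂ y)) :=
      le_min (hg₁mono (le_trans (hminΦ y) (min_le_left _ _)))
        (hg₁mono (le_trans (hminΦ y) (min_le_right _ _)))
    have h2 : g₁ (Φ (φ₁ ⊔ φ₂) y) = max (g₁ (Φ φ₁ y)) (g₁ (Φ φ₂ y)) := by
      rw [hmaxΦ y, hg₁mono.map_max]
    have h3 := min_add_max (g₁ (Φ φ₁ y)) (g₁ (Φ φ₂ y))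
    rw [h2]
    linarith
  have hFsum : (∫ y, g₁ (Φ (φ₁ ⊓ φ₂) y) ∂ν) + (∫ y, g₁ (Φ (φ₁ ⊔ φ₂) y) ∂ν)
      ≤ (∫ y, g₁ (Φ φ₁ y) ∂ν) + (∫ y, g₁ (Φ φ₂ y) ∂ν) := by
    rw [← integral_add (hint1 _) (hint1 _), ← integral_add (hint1 _) (hint1 _)]
    exact integral_mono ((hint1 _).add (hint1 _)) ((hint1 _).add (hint1 _)) hkey1
  -- the μ side
  set a : Ω → ℝ := fun x => g₀ (-φ₁ x) with hadef
  set b : Ω → ℝ := fun x => g₀ (-φ₂ x) with hbdef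
  set f : Ω → ℝ := fun x => max (b x - a x) 0 with hfdef
  have hac : Continuous a := hg₀cont.comp φ₁.continuous.neg
  have hbc : Continuous b := hg₀cont.comp φ₂.continuous.neg
  have hfc : Continuous f := ((hbc.sub hac).max continuous_const)
  have hfnn : ∀ x, 0 ≤ f x := fun x => le_max_right _ _
  have hfU : ∀ x ∈ Uᶜ, f x = 0 := by
    intro x hx
    have : b x ≤ a x := hg₀mono (neg_le_neg (hφ x hx))
    exact max_eq_right (by linarith)
  have hab : ∀ x : Ω, g₀ (-(φ₁ ⊓ φ₂) x) = a x + f x ∧ g₀ (-(φ₁ ⊔ φ₂) x) = b x - f x := by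
    intro x
    have hxm : (φ₁ ⊓ φ₂) x = min (φ₁ x) (φ₂ x) := rfl
    have hxM : (φ₁ ⊔ φ₂) x = max (φ₁ x) (φ₂ x) := rfl
    rcases le_total (φ₁ x) (φ₂ x) with h | h
    · have hba : b x ≤ a x := hg₀mono (neg_le_neg h)
      have hf0 : f x = 0 := max_eq_right (by linarith)
      constructor
      · rw [hxm, min_eq_left h, hf0, add_zero]
      · rw [hxM, max_eq_right h, hf0, sub_zero]
    · have hba : a x ≤ b x := hg₀mono (neg_le_neg h)
      have hf0 : f x = b x - a x := max_eq_left (by linarith)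
      constructor
      · rw [hxm, min_eq_right h, hf0]; show b x = a x + (b x - a x); ring
      · rw [hxM, max_eq_left h, hf0]; show a x = b x - (b x - a x); ring
  have hIa1 : Integrable a μ₁ := cont_integrable' μ₁ hac
  have hIb2 : Integrable b μ₂ := cont_integrable' μ₂ hbc
  have hIf1 : Integrable f μ₁ := cont_integrable' μ₁ hfc
  have hIf2 : Integrable f μ₂ := cont_integrable' μ₂ hfc
  have hIM1 : ∫ x, g₀ (-(φ₁ ⊓ φ₂) x) ∂μ₁ = (∫ x, a x ∂μ₁) + ∫ x, f x ∂μ₁ := by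
    rw [← integral_add hIa1 hIf1]
    exact integral_congr_ae (Filter.Eventually.of_forall fun x => (hab x).1)
  have hIm2 : ∫ x, g₀ (-(φ₁ ⊔ φ₂) x) ∂μ₂ = (∫ x, b x ∂μ₂) - ∫ x, f x ∂μ₂ := by
    rw [← integral_sub hIb2 hIf2]
    exact integral_congr_ae (Filter.Eventually.of_forall fun x => (hab x).2)
  -- comparison of ∫ f dμ₁ and ∫ f dμ₂ via lintegrals
  have hL : ∀ μ : Measure Ω, ∫⁻ x, ENNReal.ofReal (f x) ∂μ
      = ∫⁻ x in U, ENNReal.ofReal (f x) ∂μ := by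
    intro μ
    rw [← lintegral_indicator hU]
    refine lintegral_congr fun x => ?_
    by_cases hx : x ∈ U
    · simp [Set.indicator_of_mem hx]
    · simp [Set.indicator_of_notMem hx, hfU x hx]
  have hres : μ₁.restrict U ≤ μ₂.restrict U := by
    refine Measure.le_iff.2 fun s hs => ?_
    rw [Measure.restrict_apply hs, Measure.restrict_apply hs]
    exact hμ _ Set.inter_subset_right (hs.inter hU)
  have hLle : ∫⁻ x, ENNReal.ofReal (f x) ∂μ₁ ≤ ∫⁻ x, ENNReal.ofReal (f x) ∂μ₂ := by
    rw [hL μ₁, hL μ₂]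
    exact lintegral_mono' hres le_rfl
  have hLfin1 : ∫⁻ x, ENNReal.ofReal (f x) ∂μ₁ ≠ ⊤ := hIf1.lintegral_lt_top.ne
  have hLfin2 : ∫⁻ x, ENNReal.ofReal (f x) ∂μ₂ ≠ ⊤ := hIf2.lintegral_lt_top.ne
  have hfmeas : ∀ μ : Measure Ω, AEStronglyMeasurable f μ :=
    fun μ => hfc.aestronglyMeasurable
  have hIfeq : ∀ μ : Measure Ω, IsFiniteMeasure μ →
      ∫ x, f x ∂μ = (∫⁻ x, ENNReal.ofReal (f x) ∂μ).toReal := by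
    intro μ _
    exact integral_eq_lintegral_of_nonneg_ae (Filter.Eventually.of_forall hfnn) (hfmeas μ)
  have hintf_le : ∫ x, f x ∂μ₁ ≤ ∫ x, f x ∂μ₂ := by
    rw [hIfeq μ₁ inferInstance, hIfeq μ₂ inferInstance]
    exact ENNReal.toReal_mono hLfin2 hLle
  -- J values
  have e1 : J μ₁ (φ₁ ⊓ φ₂) = (∫ y, g₁ (Φ (φ₁ ⊓ φ₂) y) ∂ν) + ((∫ x, a x ∂μ₁) + ∫ x, f x ∂μ₁) := by
    rw [hJ, hIM1]
  have e2 : J μ₂ (φ₁ ⊔ φ₂) = (∫ y, g₁ (Φ (φ₁ ⊔ φ₂) y) ∂ν) + ((∫ x, b x ∂μ₂) - ∫ x, f x ∂μ₂) := by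
    rw [hJ, hIm2]
  have e3 : J μ₁ φ₁ = (∫ y, g₁ (Φ φ₁ y) ∂ν) + ∫ x, a x ∂μ₁ := hJ μ₁ φ₁
  have e4 : J μ₂ φ₂ = (∫ y, g₁ (Φ φ₂ y) ∂ν) + ∫ x, b x ∂μ₂ := hJ μ₂ φ₂
  have hmin1 : J μ₁ φ₁ ≤ J μ₁ (φ₁ ⊓ φ₂) := h₁ _
  have hmin2 : J μ₂ φ₂ ≤ J μ₂ (φ₁ ⊔ φ₂) := h₂ _
  have hA1 : J μ₁ (φ₁ ⊓ φ₂) ≤ J μ₁ φ₁ := by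
    rw [e1, e2, e3, e4] at *
    linarith
  have hA2 : J μ₂ (φ₁ ⊔ φ₂) ≤ J μ₂ φ₂ := by
    rw [e1, e2, e3, e4] at *
    linarith
  have hΔ : ∫ x, f x ∂μ₂ ≤ ∫ x, f x ∂μ₁ := by
    rw [e1, e2, e3, e4] at *
    linarith
  refine ⟨fun ψ => le_trans hA1 (h₁ ψ), fun ψ => le_trans hA2 (h₂ ψ), ?_⟩
  -- third statement
  have hfeq : ∫ x, f x ∂μ₁ = ∫ x, f x ∂μ₂ := le_antisymm hintf_le hΔ
  have hLeq : ∫⁻ x, ENNReal.ofReal (f x) ∂μ₁ = ∫⁻ x, ENNReal.ofReal (f x) ∂μ₂ := by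
    rw [hIfeq μ₁ inferInstance, hIfeq μ₂ inferInstance] at hfeq
    exact (ENNReal.toReal_eq_toReal_iff' hLfin1 hLfin2).1 hfeq
  set σ : SignedMeasure Ω := μ₂.toSignedMeasure - μ₁.toSignedMeasure with hσdef
  have hTVres : σ.totalVariation.restrict U + μ₁.restrict U = μ₂.restrict U := by
    refine Measure.ext fun s hs => ?_
    rw [Measure.add_apply, Measure.restrict_apply hs, Measure.restrict_apply hs,
      Measure.restrict_apply hs]
    exact tv_aux' μ₁ μ₂ hμ (hs.inter hU) Set.inter_subset_right
  have hgoal1 : ∀ x, ENNReal.ofReal (g₀ (-φ₂ x) - g₀ (-φ₁ x)) = ENNReal.ofReal (f x) := by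
    intro x
    rcases le_total (b x - a x) 0 with h | h
    · rw [show f x = 0 from max_eq_right h, ENNReal.ofReal_zero,
        ENNReal.ofReal_of_nonpos h]
    · rw [show f x = b x - a x from max_eq_left h]
  have hrw : ∫⁻ x, ENNReal.ofReal (g₀ (-φ₂ x) - g₀ (-φ₁ x)) ∂σ.totalVariation
      = ∫⁻ x, ENNReal.ofReal (f x) ∂σ.totalVariation := lintegral_congr hgoal1
  rw [hrw, hL σ.totalVariation]
  have hkey : (∫⁻ x in U, ENNReal.ofReal (f x) ∂σ.totalVariation)
      + ∫⁻ x in U, ENNReal.ofReal (f x) ∂μ₁ = ∫⁻ x in U, ENNReal.ofReal (f x) ∂μ₂ := by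
    rw [← lintegral_add_measure, hTVres]
  have hrw1 : ∫⁻ x in U, ENNReal.ofReal (f x) ∂μ₁ = ∫⁻ x, ENNReal.ofReal (f x) ∂μ₁ :=
    (hL μ₁).symm
  have hrw2 : ∫⁻ x in U, ENNReal.ofReal (f x) ∂μ₂ = ∫⁻ x, ENNReal.ofReal (f x) ∂μ₂ :=
    (hL μ₂).symm
  rw [hrw1, hrw2, ← hLeq] at hkey
  have := ENNReal.add_sub_cancel_right (a := ∫⁻ x in U, ENNReal.ofReal (f x) ∂σ.totalVariation)
    (b := ∫⁻ x, ENNReal.ofReal (f x) ∂μ₁) hLfin1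
  rw [hkey] at this
  rw [← this, tsub_self]
end
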